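/- arXiv:2309.12834 — 6 statements merged into one kernel-verified Lean document; each statement's English description precedes it below -/
import Mathlib

section
/- Let 0 < r < ∞ be fixed and let β̃_{n,r} be random vectors in ℝ^p satisfying ‖β̃_{n,r} − β*‖ ≤ ‖β̂_n − β*‖ almost surely for every n. Then, as n → ∞, H_{n,β̃_{n,r}}(r) − H_{n,β*}(r) converges to 0 in probability, and H_{n,β̃_{n,r}}(r) − H_{n,β̂_n}(r) converges to 0 in probability. -/
/-!
Writing `u(β) = ρ_β(x) ρ_β(y)`, the summand of `H_{n,β}(r)` for the pair `(x, y)` is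
`e_n(x,y) u⁻² ∇u = e_n(x,y) u⁻² (ρ_β(x) ∇ρ_β(y) + ρ_β(y) ∇ρ_β(x))`. On the ball of
assumption (R) every factor is bounded and, by the mean value theorem, Lipschitz in `β`, with
constants depending only on `c₁, …, c₄`; so `β ↦ u⁻² ∇u` is `L`-Lipschitz uniformly in `(x, y)`.
As `e_n(x,y) ≤ c₂² e_n(x,y) / u(β*)`, summing over pairs gives
`‖H_{n,β₁}(r) - H_{n,β₂}(r)‖ ≤ L c₂² ‖β₁ - β₂‖ K̂_n(r)` on the ball. For `β₁, β₂ ∈ {β̃, β̂, β*}`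
we have `‖β₁ - β₂‖ ≤ 2 ‖β̂_n - β*‖ → 0` in probability, while `K̂_n(r) → K(r)`; the product of
the two tends to `0` in probability.
-/

open MeasureTheory Filter Topology ENNReal

noncomputable section

namespace KFunCLT

/-- Points of `ℝ^d`. -/
abbrev Pt (d : ℕ) := EuclideanSpace ℝ (Fin d)

/-- The observation window `W_n = [-n^{1/d}/2, n^{1/d}/2]^d` of volume `n`. -/
def Wn (d n : ℕ) : Set (Pt d) :=
  {x | ∀ i, |x i| ≤ (n : ℝ) ^ ((1 : ℝ) / (d : ℝ)) / 2}

/-- The window `W_n` translated by `v`. -/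
def WnT (d n : ℕ) (v : Pt d) : Set (Pt d) := (fun x => x + v) '' Wn d n

/-- The edge correction factor `e_n(x,y) = |W_n ∩ W_{n,x-y}|⁻¹`. -/
def en (d n : ℕ) (x y : Pt d) : ℝ :=
  ((volume (Wn d n ∩ WnT d n (x - y))).toReal)⁻¹

/-- Pairs of distinct points of a set. -/
def pairs {α : Type*} (A : Set α) : Set (α × α) :=
  {q | q.1 ∈ A ∧ q.2 ∈ A ∧ q.1 ≠ q.2}

/-- Triples of pairwise distinct points of a set. -/
def triples {α : Type*} (A : Set α) : Set (α × α × α) :=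
  {q | q.1 ∈ A ∧ q.2.1 ∈ A ∧ q.2.2 ∈ A ∧ q.1 ≠ q.2.1 ∧ q.1 ≠ q.2.2 ∧ q.2.1 ≠ q.2.2}

/-- Quadruples of pairwise distinct points of a set. -/
def quads {α : Type*} (A : Set α) : Set (α × α × α × α) :=
  {q | q.1 ∈ A ∧ q.2.1 ∈ A ∧ q.2.2.1 ∈ A ∧ q.2.2.2 ∈ A ∧
    q.1 ≠ q.2.1 ∧ q.1 ≠ q.2.2.1 ∧ q.1 ≠ q.2.2.2 ∧
    q.2.1 ≠ q.2.2.1 ∧ q.2.1 ≠ q.2.2.2 ∧ q.2.2.1 ≠ q.2.2.2}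

/-- Sum of `f(x,y)` over pairs of distinct points `x ≠ y` of `A`. -/
def pairSum {α F : Type*} [AddCommMonoid F] [TopologicalSpace F]
    (A : Set α) (f : α → α → F) : F :=
  ∑' q : pairs A, f q.val.1 q.val.2

/-- The estimator `K̂_{n,β}(r)` of the `K`-function, using intensity parameter `β`. -/
def Khat {Ω : Type*} {d p : ℕ} (P : Ω → Set (Pt d))
    (ρ : EuclideanSpace ℝ (Fin p) → Pt d → ℝ)
    (n : ℕ) (b : EuclideanSpace ℝ (Fin p)) (r : ℝ) (ω : Ω) : ℝ :=
  pairSum (P ω ∩ Wn d n) fun x y =>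
    if ‖x - y‖ ≤ r then en d n x y / (ρ b x * ρ b y) else 0

/-- The vector `H_{n,β}(r) ∈ ℝ^p`, i.e. minus the sum over pairs of distinct points of
`P ∩ W_n` at distance at most `r` of `e_n(x,y) ∇_β log(ρ_β(x)ρ_β(y)) / (ρ_β(x)ρ_β(y))`. -/
def Hfun {Ω : Type*} {d p : ℕ} (P : Ω → Set (Pt d))
    (ρ : EuclideanSpace ℝ (Fin p) → Pt d → ℝ)
    (n : ℕ) (b : EuclideanSpace ℝ (Fin p)) (r : ℝ) (ω : Ω) :
    EuclideanSpace ℝ (Fin p) :=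
  - pairSum (P ω ∩ Wn d n) fun x y =>
      if ‖x - y‖ ≤ r then
        (en d n x y / (ρ b x * ρ b y)) •
          gradient (fun b' => Real.log (ρ b' x * ρ b' y)) b
      else (0 : EuclideanSpace ℝ (Fin p))

/-- Assumption (R): uniform bounds on `ρ_β` and its first two derivatives in `β`,
for `β` in a neighbourhood of the true parameter `β*`. -/
def AssumptionR {d p : ℕ} (ρ : EuclideanSpace ℝ (Fin p) → Pt d → ℝ)
    (βs : EuclideanSpace ℝ (Fin p)) : Prop :=
  ∃ ε > (0 : ℝ), ∃ c₁ c₂ c₃ c₄ : ℝ, 0 < c₁ ∧ 0 < c₂ ∧ 0 < c₃ ∧ 0 < c₄ ∧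
    ∀ b : EuclideanSpace ℝ (Fin p), ‖b - βs‖ ≤ ε → ∀ x : Pt d,
      c₁ < ρ b x ∧ ρ b x < c₂ ∧
      ‖fderiv ℝ (fun b' => ρ b' x) b‖ < c₃ ∧
      ‖fderiv ℝ (fun b' => fderiv ℝ (fun b'' => ρ b'' x) b') b‖ < c₄

end KFunCLT

open scoped NNReal

section BoundedLipschitz

variable {α 𝕜 F : Type*} [PseudoMetricSpace α] [NormedField 𝕜] [SeminormedAddCommGroup F]

structure BoundedLipschitzOnWith (M K : ℝ≥0) (f : α → F) (s : Set α) : Prop where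
  norm_le : ∀ x ∈ s, ‖f x‖ ≤ M
  lipschitzOnWith : LipschitzOnWith K f s

namespace BoundedLipschitzOnWith

variable {s : Set α} {M₁ M₂ K₁ K₂ : ℝ≥0}

theorem add {f g : α → F} (hf : BoundedLipschitzOnWith M₁ K₁ f s)
    (hg : BoundedLipschitzOnWith M₂ K₂ g s) :
    BoundedLipschitzOnWith (M₁ + M₂) (K₁ + K₂) (fun x => f x + g x) s where
  norm_le x hx := (norm_add_le _ _).trans (add_le_add (hf.norm_le x hx) (hg.norm_le x hx))
  lipschitzOnWith := hf.lipschitzOnWith.add hg.lipschitzOnWith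

theorem smul [NormedSpace 𝕜 F] {a : α → 𝕜} {v : α → F} (ha : BoundedLipschitzOnWith M₁ K₁ a s)
    (hv : BoundedLipschitzOnWith M₂ K₂ v s) :
    BoundedLipschitzOnWith (M₁ * M₂) (K₁ * M₂ + M₁ * K₂) (fun x => a x • v x) s where
  norm_le x hx := (norm_smul_le _ _).trans <|
    mul_le_mul (ha.norm_le x hx) (hv.norm_le x hx) (norm_nonneg _) M₁.coe_nonneg
  lipschitzOnWith := by
    refine LipschitzOnWith.of_dist_le_mul fun x hx y hy => ?_
    have hsplit : a x • v x - a y • v y = (a x - a y) • v x + a y • (v x - v y) := by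
      rw [sub_smul, smul_sub]; abel
    rw [dist_eq_norm, hsplit]
    calc ‖(a x - a y) • v x + a y • (v x - v y)‖
        ≤ ‖a x - a y‖ * ‖v x‖ + ‖a y‖ * ‖v x - v y‖ :=
          (norm_add_le _ _).trans (add_le_add (norm_smul_le _ _) (norm_smul_le _ _))
      _ ≤ (K₁ * dist x y) * M₂ + M₁ * (K₂ * dist x y) := by
          rw [← dist_eq_norm, ← dist_eq_norm]
          gcongr
          exacts [ha.lipschitzOnWith.dist_le_mul x hx y hy, hv.norm_le x hx, ha.norm_le y hy,
            hv.lipschitzOnWith.dist_le_mul x hx y hy]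
      _ = ↑(K₁ * M₂ + M₁ * K₂) * dist x y := by push_cast; ring

theorem inv {a : α → 𝕜} {c : ℝ≥0} (ha : BoundedLipschitzOnWith M₁ K₁ a s) (hc : 0 < c)
    (hca : ∀ x ∈ s, c ≤ ‖a x‖) :
    BoundedLipschitzOnWith c⁻¹ (K₁ / c ^ 2) (fun x => (a x)⁻¹) s where
  norm_le x hx := by
    rw [norm_inv, NNReal.coe_inv]
    exact inv_anti₀ (by exact_mod_cast hc) (hca x hx)
  lipschitzOnWith := by
    refine LipschitzOnWith.of_dist_le_mul fun x hx y hy => ?_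
    have hc' : (0 : ℝ) < c := hc
    have hax : a x ≠ 0 := norm_pos_iff.1 (hc'.trans_le (hca x hx))
    have hay : a y ≠ 0 := norm_pos_iff.1 (hc'.trans_le (hca y hy))
    rw [dist_eq_norm, inv_sub_inv hax hay, norm_div, norm_mul, ← dist_eq_norm, dist_comm]
    calc dist (a x) (a y) / (‖a x‖ * ‖a y‖) ≤ (K₁ * dist x y) / (c * c) := by
          gcongr
          exacts [ha.lipschitzOnWith.dist_le_mul x hx y hy, hca x hx, hca y hy]
      _ = ↑(K₁ / c ^ 2) * dist x y := by push_cast; ring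

end BoundedLipschitzOnWith

theorem LipschitzOnWith.congr {β : Type*} [PseudoEMetricSpace β] {f g : α → β} {s : Set α}
    {K : ℝ≥0} (hf : LipschitzOnWith K f s) (h : Set.EqOn f g s) : LipschitzOnWith K g s :=
  fun x hx y hy => by rw [← h hx, ← h hy]; exact hf hx hy

theorem Convex.boundedLipschitzOnWith_of_norm_fderiv_le {E F : Type*} [NormedAddCommGroup E]
    [NormedSpace ℝ E] [NormedAddCommGroup F] [NormedSpace ℝ F] {f : E → F} {s : Set E}
    {M K : ℝ≥0} (hs : Convex ℝ s) (hf : ∀ x ∈ s, DifferentiableAt ℝ f x)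
    (hM : ∀ x ∈ s, ‖f x‖ ≤ M) (hK : ∀ x ∈ s, ‖fderiv ℝ f x‖ ≤ K) :
    BoundedLipschitzOnWith M K f s :=
  ⟨hM, hs.lipschitzOnWith_of_nnnorm_fderiv_le hf fun x hx => by exact_mod_cast hK x hx⟩

end BoundedLipschitz

section GradientLog

open InnerProductSpace Set

variable {E : Type*} [NormedAddCommGroup E] [InnerProductSpace ℝ E] [CompleteSpace E]

theorem gradient_log_mul {f g : E → ℝ} {b : E} (hf : DifferentiableAt ℝ f b)
    (hg : DifferentiableAt ℝ g b) (hfg : f b * g b ≠ 0) :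
    gradient (fun b' => Real.log (f b' * g b')) b =
      (toDual ℝ E).symm ((f b * g b)⁻¹ • (f b • fderiv ℝ g b + g b • fderiv ℝ f b)) :=
  congrArg _ ((hf.hasFDerivAt.mul hg.hasFDerivAt).log hfg).fderiv

theorem exists_lipschitzOnWith_inv_mul_smul_gradient_log_mul {ι : Type*} {f : ι → E → ℝ}
    {s : Set E} (hs : Convex ℝ s) {c₁ c₂ c₃ c₄ : ℝ≥0} (hc₁ : 0 < c₁)
    (hf : ∀ i, ContDiff ℝ 2 (f i))
    (hbound : ∀ i, ∀ b ∈ s, c₁ < f i b ∧ f i b < c₂ ∧ ‖fderiv ℝ (f i) b‖ < c₃ ∧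
      ‖fderiv ℝ (fderiv ℝ (f i)) b‖ < c₄) :
    ∃ L : ℝ≥0, ∀ i j, LipschitzOnWith L
      (fun b => (f i b * f j b)⁻¹ • gradient (fun b' => Real.log (f i b' * f j b')) b) s := by
  have hdiff i : Differentiable ℝ (f i) := (hf i).differentiable (by norm_num)
  have hval i : BoundedLipschitzOnWith c₂ c₃ (f i) s := by
    refine hs.boundedLipschitzOnWith_of_norm_fderiv_le (fun b _ => (hdiff i).differentiableAt)
      (fun b hb => ?_) (fun b hb => (hbound i b hb).2.2.1.le)
    obtain ⟨hlow, hup, -⟩ := hbound i b hb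
    rw [Real.norm_of_nonneg (c₁.coe_nonneg.trans hlow.le)]
    exact hup.le
  have hder i : BoundedLipschitzOnWith c₃ c₄ (fderiv ℝ (f i)) s :=
    hs.boundedLipschitzOnWith_of_norm_fderiv_le
      (fun b _ =>
        (((hf i).fderiv_right (m := 1) le_rfl).differentiable one_ne_zero).differentiableAt)
      (fun b hb => (hbound i b hb).2.2.1.le) (fun b hb => (hbound i b hb).2.2.2.le)
  have hinv i j := ((hval i).smul (hval j)).inv (c := c₁ * c₁) (by positivity) fun b hb => by
    obtain ⟨hi, -⟩ := hbound i b hb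
    obtain ⟨hj, -⟩ := hbound j b hb
    rw [smul_eq_mul, norm_mul, NNReal.coe_mul]
    exact mul_le_mul (hi.le.trans (le_abs_self _)) (hj.le.trans (le_abs_self _)) c₁.coe_nonneg
      (norm_nonneg _)
  have hQ i j := (((hinv i j).smul (hinv i j)).smul
    (((hval i).smul (hder j)).add ((hval j).smul (hder i)))).lipschitzOnWith
  have hgrad i j : EqOn
      (fun b => (toDual ℝ E).symm (((f i b * f j b)⁻¹ • (f i b * f j b)⁻¹) •
        (f i b • fderiv ℝ (f j) b + f j b • fderiv ℝ (f i) b)))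
      (fun b => (f i b * f j b)⁻¹ • gradient (fun b' => Real.log (f i b' * f j b')) b) s := by
    intro b hb
    have hpos : 0 < f i b * f j b :=
      mul_pos (c₁.coe_nonneg.trans_lt (hbound i b hb).1) (c₁.coe_nonneg.trans_lt (hbound j b hb).1)
    dsimp only
    rw [gradient_log_mul (hdiff i b) (hdiff j b) hpos.ne', ← map_smul, smul_smul, smul_eq_mul]
  exact ⟨_, fun i j =>
    ((toDual ℝ E).symm.lipschitz.comp_lipschitzOnWith (hQ i j)).congr (hgrad i j)⟩

end GradientLog

namespace MeasureTheory

variable {Ω ι F : Type*} [MeasurableSpace Ω] {μ : Measure Ω} {l : Filter ι}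

theorem tendsto_measure_zero_of_ae_le_union {A B C : ι → Set Ω}
    (hA : Tendsto (fun i => μ (A i)) l (𝓝 0)) (hB : Tendsto (fun i => μ (B i)) l (𝓝 0))
    (h : ∀ i, ∀ᵐ ω ∂μ, ω ∈ C i → ω ∈ A i ∪ B i) : Tendsto (fun i => μ (C i)) l (𝓝 0) := by
  refine tendsto_of_tendsto_of_tendsto_of_le_of_le tendsto_const_nhds
    (by simpa using hA.add hB) (fun _ => zero_le) fun i => ?_
  exact (measure_mono_ae (h i)).trans (measure_union_le _ _)

theorem TendstoInMeasure.mul_of_zero_left {D Z : ι → Ω → ℝ} {z : ℝ}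
    (hD : TendstoInMeasure μ D l 0) (hZ : TendstoInMeasure μ Z l fun _ => z) :
    TendstoInMeasure μ (fun i ω => D i ω * Z i ω) l 0 := by
  rw [tendstoInMeasure_iff_norm] at hD hZ ⊢
  intro δ hδ
  have hz : 0 < |z| + 1 := by positivity
  refine tendsto_measure_zero_of_ae_le_union (hD _ (div_pos hδ hz)) (hZ 1 one_pos)
    fun i => Eventually.of_forall fun ω hω => ?_
  by_contra! hsmall
  simp only [Set.mem_union, Set.mem_ofPred_eq, not_or, not_le, Pi.zero_apply, sub_zero,
    Real.norm_eq_abs] at hsmall hω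
  obtain ⟨hDsmall, hZnear⟩ := hsmall
  have hZle : |Z i ω| ≤ |z| + 1 := by
    have := abs_sub_abs_le_abs_sub (Z i ω) z
    linarith
  have : |D i ω * Z i ω| < δ := calc
    |D i ω * Z i ω| = |D i ω| * |Z i ω| := abs_mul _ _
    _ ≤ |D i ω| * (|z| + 1) := by gcongr
    _ < δ / (|z| + 1) * (|z| + 1) := by gcongr
    _ = δ := div_mul_cancel₀ _ hz.ne'
  exact this.not_ge hω

theorem TendstoInMeasure.of_norm_le_const_mul [SeminormedAddCommGroup F] {X : ι → Ω → F}
    {Y : ι → Ω → ℝ} {E : ι → Set Ω} (hY : TendstoInMeasure μ Y l 0)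
    (hE : Tendsto (fun i => μ (E i)ᶜ) l (𝓝 0)) (C : ℝ)
    (h : ∀ i, ∀ᵐ ω ∂μ, ω ∈ E i → ‖X i ω‖ ≤ C * Y i ω) : TendstoInMeasure μ X l 0 := by
  rw [tendstoInMeasure_iff_norm] at hY ⊢
  intro δ hδ
  have hC : 0 < |C| + 1 := by positivity
  refine tendsto_measure_zero_of_ae_le_union hE (hY _ (div_pos hδ hC)) fun i => ?_
  filter_upwards [h i] with ω hbound hω
  by_contra! hsmall
  simp only [Set.mem_union, Set.mem_compl_iff, Set.mem_ofPred_eq, not_or, not_not, not_le,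
    Pi.zero_apply, sub_zero, Real.norm_eq_abs] at hsmall hω
  obtain ⟨hωE, hYsmall⟩ := hsmall
  have : ‖X i ω‖ < δ := calc
    ‖X i ω‖ ≤ C * Y i ω := hbound hωE
    _ ≤ |C| * |Y i ω| := by rw [← abs_mul]; exact le_abs_self _
    _ ≤ (|C| + 1) * |Y i ω| := by gcongr; linarith
    _ < (|C| + 1) * (δ / (|C| + 1)) := by gcongr
    _ = δ := mul_div_cancel₀ _ hC.ne'
  exact this.not_ge hω

end MeasureTheory

namespace KFunCLT

lemma isCompact_Wn (d n : ℕ) : IsCompact (Wn d n) := by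
  set c : ℝ := (n : ℝ) ^ ((1 : ℝ) / (d : ℝ)) / 2
  have hWn : Wn d n = EuclideanSpace.equiv (Fin d) ℝ ⁻¹' Set.univ.pi fun _ => Set.Icc (-c) c := by
    ext x; simp only [Wn, Set.mem_preimage, Set.mem_univ_pi, Set.mem_Icc, abs_le]; rfl
  rw [hWn]
  exact (EuclideanSpace.equiv (Fin d) ℝ).toHomeomorph.isCompact_preimage.2
    (isCompact_univ_pi fun _ => isCompact_Icc)

lemma en_nonneg (d n : ℕ) (x y : Pt d) : 0 ≤ en d n x y :=
  inv_nonneg.2 ENNReal.toReal_nonneg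

lemma Khat_nonneg {Ω : Type*} {d p : ℕ} (P : Ω → Set (Pt d))
    {ρ : EuclideanSpace ℝ (Fin p) → Pt d → ℝ} (hρpos : ∀ b x, 0 < ρ b x)
    (n : ℕ) (b : EuclideanSpace ℝ (Fin p)) (r : ℝ) (ω : Ω) : 0 ≤ Khat P ρ n b r ω :=
  tsum_nonneg fun _ => by
    dsimp only
    split_ifs
    exacts [div_nonneg (en_nonneg d n _ _) (mul_pos (hρpos b _) (hρpos b _)).le, le_rfl]

lemma norm_pairSum_sub_le {α F : Type*} [NormedAddCommGroup F] {A : Set α} (hA : A.Finite)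
    {f g : α → α → F} {h : α → α → ℝ} (C : ℝ) (hfg : ∀ x y, ‖f x y - g x y‖ ≤ C * h x y) :
    ‖pairSum A f - pairSum A g‖ ≤ C * pairSum A h := by
  have : Finite (pairs A) := ((hA.prod hA).subset fun q hq => ⟨hq.1, hq.2.1⟩).to_subtype
  unfold pairSum
  rw [← Summable.of_finite.tsum_sub Summable.of_finite, ← tsum_mul_left]
  exact (norm_tsum_le_tsum_norm Summable.of_finite).trans
    (Summable.of_finite.tsum_le_tsum (fun q => hfg _ _) Summable.of_finite)

lemma norm_Hfun_sub_le {Ω : Type*} {d p : ℕ} (P : Ω → Set (Pt d))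
    {ρ : EuclideanSpace ℝ (Fin p) → Pt d → ℝ} (hρpos : ∀ b x, 0 < ρ b x) {n : ℕ} {r : ℝ} {ω : Ω}
    (hfin : (P ω ∩ Wn d n).Finite) {s : Set (EuclideanSpace ℝ (Fin p))} {L : ℝ≥0}
    (hL : ∀ x y, LipschitzOnWith L
      (fun b => (ρ b x * ρ b y)⁻¹ • gradient (fun b' => Real.log (ρ b' x * ρ b' y)) b) s)
    {b₀ b₁ b₂ : EuclideanSpace ℝ (Fin p)} {c : ℝ} (hc : ∀ x, ρ b₀ x ≤ c) (hb₁ : b₁ ∈ s)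
    (hb₂ : b₂ ∈ s) :
    ‖Hfun P ρ n b₁ r ω - Hfun P ρ n b₂ r ω‖ ≤ L * c ^ 2 * ‖b₁ - b₂‖ * Khat P ρ n b₀ r ω := by
  unfold Hfun Khat
  rw [neg_sub_neg, norm_sub_rev]
  refine norm_pairSum_sub_le hfin _ fun x y => ?_
  split_ifs
  · have hQ := (hL x y).dist_le_mul b₁ hb₁ b₂ hb₂
    rw [dist_eq_norm, dist_eq_norm] at hQ
    have hρ₀ : 0 < ρ b₀ x * ρ b₀ y := mul_pos (hρpos b₀ x) (hρpos b₀ y)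
    have hρ₀c : ρ b₀ x * ρ b₀ y ≤ c ^ 2 := by
      rw [sq]; exact mul_le_mul (hc x) (hc y) (hρpos b₀ y).le ((hρpos b₀ x).le.trans (hc x))
    have hen := en_nonneg d n x y
    rw [div_eq_mul_inv, div_eq_mul_inv, mul_smul, mul_smul, ← smul_sub, norm_smul,
      Real.norm_of_nonneg hen]
    calc en d n x y * ‖_ - _‖ ≤ en d n x y * (L * ‖b₁ - b₂‖) := by gcongr
      _ = L * ‖b₁ - b₂‖ * (en d n x y * (ρ b₀ x * ρ b₀ y)⁻¹) * (ρ b₀ x * ρ b₀ y) := by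
          rw [mul_assoc _ (en d n x y * _), inv_mul_cancel_right₀ hρ₀.ne']; ring
      _ ≤ L * ‖b₁ - b₂‖ * (en d n x y * (ρ b₀ x * ρ b₀ y)⁻¹) * c ^ 2 := by gcongr
      _ = L * c ^ 2 * ‖b₁ - b₂‖ * (en d n x y * (ρ b₀ x * ρ b₀ y)⁻¹) := by ring
  · simp

theorem tendstoInMeasure_Hfun_sub {d p : ℕ} {Ω : Type*} [MeasurableSpace Ω] {μ : Measure Ω}
    {P : Ω → Set (Pt d)} (hPloc : ∀ ω, ∀ K : Set (Pt d), IsCompact K → (P ω ∩ K).Finite)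
    {ρ : EuclideanSpace ℝ (Fin p) → Pt d → ℝ} {βs : EuclideanSpace ℝ (Fin p)}
    (hρpos : ∀ b x, 0 < ρ b x) (hρC2 : ∀ x, ContDiff ℝ 2 fun b => ρ b x)
    (hR : AssumptionR ρ βs) {βhat : ℕ → Ω → EuclideanSpace ℝ (Fin p)}
    (hβcons : TendstoInMeasure μ βhat atTop fun _ => βs) {r k : ℝ}
    (hK : TendstoInMeasure μ (fun n ω => Khat P ρ n βs r ω) atTop fun _ => k)
    {b₁ b₂ : ℕ → Ω → EuclideanSpace ℝ (Fin p)}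
    (hb₁ : ∀ n, ∀ᵐ ω ∂μ, ‖b₁ n ω - βs‖ ≤ ‖βhat n ω - βs‖)
    (hb₂ : ∀ n, ∀ᵐ ω ∂μ, ‖b₂ n ω - βs‖ ≤ ‖βhat n ω - βs‖) :
    TendstoInMeasure μ (fun n ω => Hfun P ρ n (b₁ n ω) r ω - Hfun P ρ n (b₂ n ω) r ω) atTop 0 := by
  obtain ⟨ε, hε, c₁, c₂, c₃, c₄, hc₁, hc₂, hc₃, hc₄, hbound⟩ := hR
  lift c₁ to ℝ≥0 using hc₁.le
  lift c₂ to ℝ≥0 using hc₂.le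
  lift c₃ to ℝ≥0 using hc₃.le
  lift c₄ to ℝ≥0 using hc₄.le
  obtain ⟨L, hL⟩ := exists_lipschitzOnWith_inv_mul_smul_gradient_log_mul
    (f := fun x b => ρ b x) (convex_closedBall βs ε) (mod_cast hc₁) hρC2
    fun x b hb => hbound b (mem_closedBall_iff_norm.1 hb) x
  have hdist : TendstoInMeasure μ (fun n ω => ‖βhat n ω - βs‖) atTop 0 := by
    rw [tendstoInMeasure_iff_norm] at hβcons ⊢
    simpa using hβcons
  have hfar : Tendsto (fun n => μ {ω | ‖βhat n ω - βs‖ ≤ ε}ᶜ) atTop (𝓝 0) :=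
    tendsto_of_tendsto_of_tendsto_of_le_of_le tendsto_const_nhds
      (tendstoInMeasure_iff_norm.1 hβcons ε hε) (fun _ => zero_le)
      fun n => measure_mono fun ω (hω : ¬_ ≤ ε) => (not_le.1 hω).le
  refine (hdist.mul_of_zero_left hK).of_norm_le_const_mul hfar (2 * L * c₂ ^ 2) fun n => ?_
  filter_upwards [hb₁ n, hb₂ n] with ω h₁ h₂ (hω : ‖βhat n ω - βs‖ ≤ ε)
  have hmem {b : EuclideanSpace ℝ (Fin p)} (hb : ‖b - βs‖ ≤ ‖βhat n ω - βs‖) :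
      b ∈ Metric.closedBall βs ε := mem_closedBall_iff_norm.2 (hb.trans hω)
  calc ‖Hfun P ρ n (b₁ n ω) r ω - Hfun P ρ n (b₂ n ω) r ω‖
      ≤ L * c₂ ^ 2 * ‖b₁ n ω - b₂ n ω‖ * Khat P ρ n βs r ω :=
        norm_Hfun_sub_le P hρpos (hPloc ω _ (isCompact_Wn d n)) hL
          (fun x => (hbound βs (by simp [hε.le]) x).2.1.le) (hmem h₁) (hmem h₂)
    _ ≤ L * c₂ ^ 2 * (‖βhat n ω - βs‖ + ‖βhat n ω - βs‖) * Khat P ρ n βs r ω := by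
        gcongr
        · exact Khat_nonneg P hρpos n βs r ω
        · exact (norm_sub_le_norm_sub_add_norm_sub _ βs _).trans
            (add_le_add h₁ ((norm_sub_rev _ _).trans_le h₂))
    _ = 2 * L * c₂ ^ 2 * (‖βhat n ω - βs‖ * Khat P ρ n βs r ω) := by ring

end KFunCLT

open KFunCLT

theorem statement0_general
    {d p : ℕ}
    {Ω : Type*} [MeasurableSpace Ω] (μ : Measure Ω)
    (P : Ω → Set (Pt d))
    (hPloc : ∀ ω, ∀ K : Set (Pt d), IsCompact K → (P ω ∩ K).Finite)
    (ρ : EuclideanSpace ℝ (Fin p) → Pt d → ℝ) (βs : EuclideanSpace ℝ (Fin p))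
    (hρpos : ∀ b x, 0 < ρ b x)
    (hρC2 : ∀ x, ContDiff ℝ 2 fun b => ρ b x)
    (hR : AssumptionR ρ βs)
    (βhat : ℕ → Ω → EuclideanSpace ℝ (Fin p))
    (hβcons : TendstoInMeasure μ βhat atTop fun _ => βs)
    (K : ℝ → ℝ)
    (hKcons : ∀ r : ℝ, 0 < r →
      TendstoInMeasure μ (fun n ω => Khat P ρ n βs r ω) atTop fun _ => K r)
    (r : ℝ) (hr : 0 < r)
    (βtil : ℕ → Ω → EuclideanSpace ℝ (Fin p))
    (hβtil : ∀ n, ∀ᵐ ω ∂μ, ‖βtil n ω - βs‖ ≤ ‖βhat n ω - βs‖) :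
    TendstoInMeasure μ
      (fun n ω => Hfun P ρ n (βtil n ω) r ω - Hfun P ρ n βs r ω) atTop
      (fun _ => (0 : EuclideanSpace ℝ (Fin p))) ∧
    TendstoInMeasure μ
      (fun n ω => Hfun P ρ n (βtil n ω) r ω - Hfun P ρ n (βhat n ω) r ω) atTop
      (fun _ => (0 : EuclideanSpace ℝ (Fin p))) := by
  exact ⟨tendstoInMeasure_Hfun_sub hPloc hρpos hρC2 hR hβcons (hKcons r hr) hβtil
      fun n => ae_of_all _ fun ω => by simp,
    tendstoInMeasure_Hfun_sub hPloc hρpos hρC2 hR hβcons (hKcons r hr) hβtil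
      fun n => ae_of_all _ fun ω => le_rfl⟩

/-- if `‖β̃_{n,r} - β*‖ ≤ ‖β̂_n - β*‖` a.s., then
`H_{n,β̃_{n,r}}(r) - H_{n,β*}(r) → 0` and `H_{n,β̃_{n,r}}(r) - H_{n,β̂_n}(r) → 0`
in probability. -/
theorem statement0
    {d p : ℕ} (hd : 1 ≤ d)
    {Ω : Type*} [MeasurableSpace Ω] (μ : Measure Ω) [IsProbabilityMeasure μ]
    (P : Ω → Set (Pt d))
    (hPloc : ∀ ω, ∀ K : Set (Pt d), IsCompact K → (P ω ∩ K).Finite)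
    (ρ : EuclideanSpace ℝ (Fin p) → Pt d → ℝ) (βs : EuclideanSpace ℝ (Fin p))
    (hρpos : ∀ b x, 0 < ρ b x)
    (hρC2 : ∀ x, ContDiff ℝ 2 fun b => ρ b x)
    (hR : AssumptionR ρ βs)
    (βhat : ℕ → Ω → EuclideanSpace ℝ (Fin p))
    (hβcons : TendstoInMeasure μ βhat atTop fun _ => βs)
    (K : ℝ → ℝ)
    (hKcons : ∀ r : ℝ, 0 < r →
      TendstoInMeasure μ (fun n ω => Khat P ρ n βs r ω) atTop fun _ => K r)
    (r : ℝ) (hr : 0 < r)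
    (βtil : ℕ → Ω → EuclideanSpace ℝ (Fin p))
    (hβtil : ∀ n, ∀ᵐ ω ∂μ, ‖βtil n ω - βs‖ ≤ ‖βhat n ω - βs‖) :
    TendstoInMeasure μ
      (fun n ω => Hfun P ρ n (βtil n ω) r ω - Hfun P ρ n βs r ω) atTop
      (fun _ => (0 : EuclideanSpace ℝ (Fin p))) ∧
    TendstoInMeasure μ
      (fun n ω => Hfun P ρ n (βtil n ω) r ω - Hfun P ρ n (βhat n ω) r ω) atTop
      (fun _ => (0 : EuclideanSpace ℝ (Fin p))) :=
  statement0_general μ P hPloc ρ βs hρpos hρC2 hR βhat hβcons K hKcons r hr βtil hβtil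
end
end

section
/- Let 0 < δ < R − r₀, let f₁ : [r₀,R] → ℝ be any bounded function, and let f₂ : [r₀,R] → ℝ and g : (0,∞) → [0,∞) be such that |f₂(s) − f₂(t)| ≤ g(h) whenever s, t ∈ [r₀,R] with |s − t| ≤ h. Then ω′_{f₁+f₂}(δ) ≤ ω′_{f₁}(δ) + g(2δ). -/
open Set ENNReal

noncomputable section

namespace CadlagMod

def osc (f : ℝ → ℝ) (a b : ℝ) : ℝ≥0∞ :=
  ⨆ s : Set.Ico a b, ⨆ u : Set.Ico a b, ENNReal.ofReal |f s - f u|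

def IsPart (r₀ R δ : ℝ) (k : ℕ) (t : ℕ → ℝ) : Prop :=
  0 < k ∧ t 0 = r₀ ∧ t k = R ∧ ∀ i < k, δ < t (i + 1) - t i

def cadlagMod (r₀ R : ℝ) (f : ℝ → ℝ) (δ : ℝ) : ℝ≥0∞ :=
  ⨅ (k : ℕ) (t : ℕ → ℝ) (_ : IsPart r₀ R δ k t),
    ⨆ i : Fin k, osc f (t i) (t (i + 1))

end CadlagMod

open CadlagMod

lemma le_osc' {f : ℝ → ℝ} {a b s u : ℝ} (hs : s ∈ Set.Ico a b) (hu : u ∈ Set.Ico a b) :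
    ENNReal.ofReal |f s - f u| ≤ osc f a b :=
  le_iSup_of_le ⟨s, hs⟩ (le_iSup_of_le ⟨u, hu⟩ le_rfl)

lemma osc_le' {f : ℝ → ℝ} {a b : ℝ} {C : ℝ≥0∞}
    (h : ∀ s ∈ Set.Ico a b, ∀ u ∈ Set.Ico a b, ENNReal.ofReal |f s - f u| ≤ C) :
    osc f a b ≤ C :=
  iSup_le fun s => iSup_le fun u => h s s.2 u u.2

lemma part_mono' {r₀ R δ : ℝ} (hδ : 0 < δ) {k : ℕ} {t : ℕ → ℝ}
    (hP : IsPart r₀ R δ k t) : ∀ a b : ℕ, a ≤ b → b ≤ k → t a ≤ t b := by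
  intro a b hab hbk
  induction b with
  | zero =>
    have : a = 0 := by omega
    rw [this]
  | succ n ih =>
    rcases Nat.eq_or_lt_of_le hab with h | h
    · exact h ▸ le_rfl
    · have h1 : t a ≤ t n := ih (by omega) (by omega)
      have h2 : δ < t (n+1) - t n := hP.2.2.2 n (by omega)
      linarith

lemma refine_part {r₀ R δ : ℝ} (hδ : 0 < δ) {k : ℕ} {t : ℕ → ℝ}
    (hP : IsPart r₀ R δ k t) :
    ∃ (k' : ℕ) (t' : ℕ → ℝ), IsPart r₀ R δ k' t' ∧
      ∀ j < k', ∃ i < k, t i ≤ t' j ∧ t' (j+1) ≤ t (i+1) ∧ t' (j+1) - t' j ≤ 2*δ := by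
  obtain ⟨hk, h0, hkR, hgap⟩ := hP
  set L : ℕ → ℝ := fun i => t (i+1) - t i with hL
  set m : ℕ → ℕ := fun i => max 1 ⌈L i / (2*δ)⌉₊ with hm
  set c : ℕ → ℕ := fun i => ∑ i' ∈ Finset.range i, m i' with hc
  have hm1 : ∀ i, 1 ≤ m i := fun i => le_max_left _ _
  have hcsucc : ∀ i, c (i+1) = c i + m i := fun i => Finset.sum_range_succ _ _
  have hc0 : c 0 = 0 := rfl
  have hcmono : Monotone c := monotone_nat_of_le_succ (fun i => by rw [hcsucc]; omega)
  have h2δ : (0:ℝ) < 2*δ := by linarith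
  have hd : ∀ i < k, δ < L i / m i ∧ L i / m i ≤ 2*δ := by
    intro i hi
    have hLi : δ < L i := hgap i hi
    have hLpos : 0 < L i := hδ.trans hLi
    by_cases hca : L i ≤ 2*δ
    · have hle : ⌈L i / (2*δ)⌉₊ ≤ 1 := Nat.ceil_le.2 (by
        rw [Nat.cast_one, div_le_one h2δ]; exact hca)
      have hmi : m i = 1 := by simp only [hm]; omega
      rw [hmi]; push_cast; rw [div_one]; exact ⟨hLi, hca⟩
    · push_neg at hca
      have hone : (1:ℝ) ≤ L i / (2*δ) := by rw [le_div_iff₀ h2δ]; linarith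
      have hceil1 : 1 ≤ ⌈L i / (2*δ)⌉₊ := by
        have := Nat.le_ceil (L i / (2*δ)); exact_mod_cast Nat.one_le_iff_ne_zero.2 (by
          intro h; rw [h] at this; push_cast at this; linarith)
      have hmi : m i = ⌈L i / (2*δ)⌉₊ := max_eq_right hceil1
      have hmpos : (0:ℝ) < (m i : ℝ) := by exact_mod_cast hm1 i
      constructor
      · rw [lt_div_iff₀ hmpos]
        have h1 : ((m i : ℝ)) < L i / (2*δ) + 1 := by
          rw [hmi]; exact Nat.ceil_lt_add_one (by positivity)
        have h1' : ((m i : ℝ) - 1) * (2*δ) < L i := by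
          rw [← lt_div_iff₀ h2δ]; linarith
        nlinarith
      · rw [div_le_iff₀ hmpos]
        have h2 : L i / (2*δ) ≤ (m i : ℝ) := by rw [hmi]; exact Nat.le_ceil _
        have := (div_le_iff₀ h2δ).mp h2
        linarith
  set bIdx : ℕ → ℕ := fun j => Nat.findGreatest (fun i => c i ≤ j) k with hbdef
  set t' : ℕ → ℝ := fun j =>
    t (bIdx j) + ((j - c (bIdx j) : ℕ) : ℝ) * (L (bIdx j) / m (bIdx j)) with ht'
  have hbIdx : ∀ i ≤ k, ∀ j, c i ≤ j → j < c (i+1) → bIdx j = i := by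
    intro i hik j h1 h2
    refine le_antisymm ?_ (Nat.le_findGreatest hik h1)
    by_contra h
    push_neg at h
    have h3 : c (bIdx j) ≤ j := Nat.findGreatest_spec (P := fun i' => c i' ≤ j) hik h1
    have h4 : c (i+1) ≤ c (bIdx j) := hcmono h
    omega
  have hck : 0 < c k := by
    have h1k : c 1 ≤ c k := hcmono hk
    have h01 : c 1 = m 0 := by simp only [hc]; exact Finset.sum_range_one m
    have hm0 : 1 ≤ m 0 := hm1 0
    omega
  have hb0 : bIdx 0 = 0 := hbIdx 0 (Nat.zero_le k) 0 (le_of_eq hc0) (by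
    rw [hcsucc]; have := hm1 0; omega)
  have ht'0 : t' 0 = r₀ := by
    rw [ht']; simp only [hb0, hc0, Nat.sub_zero, Nat.cast_zero, zero_mul, add_zero]
    exact h0
  have hbk : bIdx (c k) = k := le_antisymm (Nat.findGreatest_le k)
    (Nat.le_findGreatest le_rfl le_rfl)
  have ht'k : t' (c k) = R := by
    rw [ht']; simp only [hbk, Nat.sub_self, Nat.cast_zero, zero_mul, add_zero]
    exact hkR
  have key : ∀ j < c k, ∃ i < k, c i ≤ j ∧ j < c (i+1) ∧
      t' j = t i + ((j - c i : ℕ) : ℝ) * (L i / m i) ∧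
      t' (j+1) = t i + (((j - c i : ℕ) : ℝ) + 1) * (L i / m i) := by
    intro j hj
    set i := bIdx j with hi
    have hci : c i ≤ j := Nat.findGreatest_spec (P := fun i' => c i' ≤ j) (Nat.zero_le k)
      (by omega : c 0 ≤ j)
    have hik : i ≤ k := Nat.findGreatest_le k
    have hik' : i < k := by
      rcases Nat.eq_or_lt_of_le hik with h | h
      · exfalso; rw [h] at hci; omega
      · exact h
    have hjc : j < c (i+1) := by
      have hngt : ¬ c (i+1) ≤ j := Nat.findGreatest_is_greatest (P := fun i' => c i' ≤ j)
        (Nat.lt_succ_self i) (by omega : i + 1 ≤ k)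
      omega
    refine ⟨i, hik', hci, hjc, rfl, ?_⟩
    by_cases hcase : j + 1 < c (i+1)
    · have hb1 : bIdx (j+1) = i := hbIdx i hik (j+1) (by omega) hcase
      rw [ht']
      simp only [hb1]
      have : (j + 1 - c i : ℕ) = (j - c i) + 1 := by omega
      rw [this]
      push_cast
      ring
    · have hEq : j + 1 = c (i+1) := by omega
      have hb1 : bIdx (j+1) = i+1 := hbIdx (i+1) (by omega) (j+1) (by omega) (by
        rw [hcsucc (i+1)]; have := hm1 (i+1); omega)
      have ht'j : t' (j+1) = t (i+1) := by
        rw [ht']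
        simp only [hb1]
        rw [hEq, Nat.sub_self]
        push_cast
        ring
      rw [ht'j]
      have hoff : (j - c i) + 1 = m i := by
        have := hcsucc i; omega
      have hmne : (m i : ℝ) ≠ 0 := by
        have := hm1 i; positivity
      have hcast : (((j - c i : ℕ) : ℝ) + 1) = (m i : ℝ) := by exact_mod_cast congrArg Nat.cast hoff
      rw [hcast, mul_div_cancel₀ _ hmne]
      simp only [hL]
      ring
  refine ⟨c k, t', ⟨hck, ht'0, ht'k, ?_⟩, ?_⟩
  · intro j hj
    obtain ⟨i, hik, hci, hjc, he1, he2⟩ := key j hj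
    rw [he1, he2, show t i + (((j - c i : ℕ) : ℝ) + 1) * (L i / m i) -
        (t i + ((j - c i : ℕ) : ℝ) * (L i / m i)) = L i / m i from by ring]
    exact (hd i hik).1
  · intro j hj
    obtain ⟨i, hik, hci, hjc, he1, he2⟩ := key j hj
    have hdle := (hd i hik).2
    have hdpos : 0 < L i / m i := hδ.trans (hd i hik).1
    refine ⟨i, hik, ?_, ?_, ?_⟩
    · rw [he1]
      have : (0:ℝ) ≤ ((j - c i : ℕ) : ℝ) := Nat.cast_nonneg _
      nlinarith
    · rw [he2]
      have hoff : (j - c i) + 1 ≤ m i := by have := hcsucc i; omega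
      have hoff' : (((j - c i : ℕ) : ℝ) + 1) ≤ (m i : ℝ) := by exact_mod_cast hoff
      have hmne : (m i : ℝ) ≠ 0 := by have := hm1 i; positivity
      have : (((j - c i : ℕ) : ℝ) + 1) * (L i / m i) ≤ (m i : ℝ) * (L i / m i) :=
        mul_le_mul_of_nonneg_right hoff' hdpos.le
      have hLi : (m i : ℝ) * (L i / m i) = L i := mul_div_cancel₀ _ hmne
      rw [hL] at hLi
      linarith [hLi ▸ this]
    · rw [he1, he2]
      rw [show t i + (((j - c i : ℕ) : ℝ) + 1) * (L i / m i) -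
          (t i + ((j - c i : ℕ) : ℝ) * (L i / m i)) = L i / m i by ring]
      exact hdle

/-- `ω'_{f₁+f₂}(δ) ≤ ω'_{f₁}(δ) + g(2δ)` when `f₁` is bounded and
`f₂` admits `g` as a modulus of continuity on `[r₀,R]`. -/
theorem statement7
    (r₀ R : ℝ) (hr₀ : 0 ≤ r₀) (hr₀R : r₀ < R)
    (δ : ℝ) (hδ : 0 < δ) (hδR : δ < R - r₀)
    (f₁ : ℝ → ℝ) (hf₁ : ∃ M : ℝ, ∀ x ∈ Set.Icc r₀ R, |f₁ x| ≤ M)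
    (f₂ : ℝ → ℝ) (g : ℝ → ℝ) (hg0 : ∀ h : ℝ, 0 < h → 0 ≤ g h)
    (hmod : ∀ s t : ℝ, s ∈ Set.Icc r₀ R → t ∈ Set.Icc r₀ R →
      ∀ h : ℝ, 0 < h → |s - t| ≤ h → |f₂ s - f₂ t| ≤ g h) :
    cadlagMod r₀ R (fun x => f₁ x + f₂ x) δ
      ≤ cadlagMod r₀ R f₁ δ + ENNReal.ofReal (g (2 * δ)) := by
  conv_rhs => rw [cadlagMod]
  rw [ENNReal.iInf_add]
  refine le_iInf fun k => ?_
  rw [ENNReal.iInf_add]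
  refine le_iInf fun t => ?_
  rw [ENNReal.iInf_add]
  refine le_iInf fun hP => ?_
  obtain ⟨k', t', hP', hsub⟩ := refine_part hδ hP
  calc cadlagMod r₀ R (fun x => f₁ x + f₂ x) δ
      ≤ ⨆ j : Fin k', osc (fun x => f₁ x + f₂ x) (t' j) (t' (j + 1)) :=
        iInf_le_of_le k' (iInf_le_of_le t' (iInf_le _ hP'))
    _ ≤ (⨆ i : Fin k, osc f₁ (t i) (t (i + 1))) + ENNReal.ofReal (g (2 * δ)) := by
        refine iSup_le fun j => ?_
        obtain ⟨i, hik, h1, h2, h3⟩ := hsub j j.isLt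
        refine osc_le' fun s hs u hu => ?_
        have hs' : s ∈ Set.Ico (t i) (t (i+1)) := ⟨h1.trans hs.1, lt_of_lt_of_le hs.2 h2⟩
        have hu' : u ∈ Set.Ico (t i) (t (i+1)) := ⟨h1.trans hu.1, lt_of_lt_of_le hu.2 h2⟩
        have htr : r₀ ≤ t i := hP.2.1 ▸ part_mono' hδ hP 0 i (Nat.zero_le _) (by omega)
        have htR : t (i+1) ≤ R := hP.2.2.1 ▸ part_mono' hδ hP (i+1) k (by omega) le_rfl
        have hsI : s ∈ Set.Icc r₀ R := ⟨htr.trans hs'.1, hs'.2.le.trans htR⟩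
        have huI : u ∈ Set.Icc r₀ R := ⟨htr.trans hu'.1, hu'.2.le.trans htR⟩
        have hsu : |s - u| ≤ 2*δ := by
          rw [abs_le]
          obtain ⟨hsl, hsr⟩ := hs
          obtain ⟨hul, hur⟩ := hu
          constructor <;> linarith
        have h2f : |f₂ s - f₂ u| ≤ g (2*δ) := hmod s u hsI huI (2*δ) (by linarith) hsu
        have habs : |(f₁ s + f₂ s) - (f₁ u + f₂ u)| ≤ |f₁ s - f₁ u| + g (2*δ) := by
          calc |(f₁ s + f₂ s) - (f₁ u + f₂ u)| = |(f₁ s - f₁ u) + (f₂ s - f₂ u)| := by ring_nf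
            _ ≤ |f₁ s - f₁ u| + |f₂ s - f₂ u| := abs_add_le _ _
            _ ≤ |f₁ s - f₁ u| + g (2*δ) := by linarith
        calc ENNReal.ofReal |(fun x => f₁ x + f₂ x) s - (fun x => f₁ x + f₂ x) u|
            ≤ ENNReal.ofReal (|f₁ s - f₁ u| + g (2*δ)) := ENNReal.ofReal_le_ofReal habs
          _ = ENNReal.ofReal |f₁ s - f₁ u| + ENNReal.ofReal (g (2*δ)) :=
              ENNReal.ofReal_add (abs_nonneg _) (hg0 _ (by linarith))
          _ ≤ (⨆ i : Fin k, osc f₁ (t i) (t (i + 1))) + ENNReal.ofReal (g (2*δ)) := by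
              refine add_le_add ?_ le_rfl
              exact le_trans (le_osc' hs' hu')
                (le_iSup (fun i : Fin k => osc f₁ (t i) (t (i + 1))) ⟨i, hik⟩)
end
end

section
/- For every function f : [r₀,R] → ℝ and every 0 < δ < R − r₀, the cadlag modulus ω′_f(δ) equals the infimum of max_{i=1,…,k} sup_{s,t∈[t_{i−1},t_i)} |f(s)−f(t)| taken only over those finite partitions r₀ = t₀ < t₁ < ⋯ < t_k = R satisfying δ < t_i − t_{i−1} ≤ 2δ for all i. -/
open Set ENNReal

noncomputable section

open CadlagMod

namespace CadlagMod

lemma osc_mono {f : ℝ → ℝ} {a b a' b' : ℝ} (h : Set.Ico a' b' ⊆ Set.Ico a b) :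
    osc f a' b' ≤ osc f a b := by
  refine iSup_le fun s => iSup_le fun u => ?_
  exact le_iSup_of_le ⟨s.1, h s.2⟩ (le_iSup_of_le ⟨u.1, h u.2⟩ le_rfl)

/-- The restricted infimum (over partitions with gaps in `(δ, 2δ]`). -/
noncomputable def rMod (δ a b : ℝ) (f : ℝ → ℝ) : ℝ≥0∞ :=
  ⨅ (k : ℕ) (t : ℕ → ℝ)
    (_ : IsPart a b δ k t ∧ ∀ i < k, t (i + 1) - t i ≤ 2 * δ),
    ⨆ i : Fin k, osc f (t i) (t (i + 1))

lemma rMod_le_osc {δ a b : ℝ} (hδ : 0 < δ) (hab : δ < b - a) (f : ℝ → ℝ) :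
    rMod δ a b f ≤ osc f a b := by
  have hba : (0:ℝ) < b - a := lt_trans hδ hab
  set m : ℕ := ⌈(b - a) / (2 * δ)⌉₊ with hm
  have h2δ : (0:ℝ) < 2 * δ := by linarith
  have hm1 : 1 ≤ m := Nat.one_le_ceil_iff.2 (div_pos hba h2δ)
  have hm0 : (0:ℝ) < (m:ℝ) := by exact_mod_cast hm1
  set g : ℝ := (b - a) / m with hg
  -- gap is at most 2δ
  have hgle : g ≤ 2 * δ := by
    rw [hg, div_le_iff₀ hm0]
    have h1 := Nat.le_ceil ((b - a) / (2 * δ))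
    rw [← hm] at h1
    have h2 := (div_le_iff₀ h2δ).1 h1
    linarith
  -- gap is more than δ
  have hggt : δ < g := by
    rcases le_or_gt (b - a) (2 * δ) with hle | hgt
    · have hmle : m ≤ 1 := by
        rw [hm, Nat.ceil_le, Nat.cast_one, div_le_one h2δ]; exact hle
      have hmeq : m = 1 := le_antisymm hmle hm1
      rw [hg, hmeq]; simpa using hab
    · have hceil : (m:ℝ) < (b - a) / (2 * δ) + 1 := by
        rw [hm]; exact Nat.ceil_lt_add_one (le_of_lt (div_pos hba h2δ))
      rw [hg, lt_div_iff₀ hm0]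
      have key : δ * ((b - a) / (2 * δ) + 1) = (b - a) / 2 + δ := by
        field_simp
      nlinarith
  set s : ℕ → ℝ := fun j => a + j * g with hs
  have hgap : ∀ i : ℕ, s (i + 1) - s i = g := by
    intro i; rw [hs]; push_cast; ring
  have hpart : IsPart a b δ m s ∧ ∀ i < m, s (i + 1) - s i ≤ 2 * δ := by
    refine ⟨⟨hm1, by simp [hs], ?_, fun i _ => by rw [hgap]; exact hggt⟩,
      fun i _ => by rw [hgap]; exact hgle⟩
    rw [hs]; simp only
    rw [hg]; field_simp; ring
  have hsub : ∀ i : Fin m, osc f (s i) (s (i + 1)) ≤ osc f a b := by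
    intro i
    refine osc_mono ?_
    have hg0 : 0 < g := lt_trans hδ hggt
    intro x hx
    constructor
    · have : a ≤ s i := by
        rw [hs]; simp only
        nlinarith [Nat.cast_nonneg (α := ℝ) i.1]
      exact le_trans this hx.1
    · have hle : s (i.1 + 1) ≤ b := by
        rw [hs]; simp only
        push_cast
        have h1 : ((i:ℕ):ℝ) + 1 ≤ (m:ℝ) := by
          exact_mod_cast Nat.succ_le_of_lt i.2
        have : (m:ℝ) * g = b - a := by rw [hg]; field_simp
        nlinarith
      calc x < s (i.1 + 1) := hx.2
        _ ≤ b := hle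
  calc rMod δ a b f ≤ ⨆ i : Fin m, osc f (s i) (s (i + 1)) := by
        exact iInf_le_of_le m (iInf_le_of_le s (iInf_le_of_le hpart le_rfl))
    _ ≤ osc f a b := iSup_le hsub

lemma rMod_le_sup (δ a b c : ℝ) (f : ℝ → ℝ) :
    rMod δ a c f ≤ rMod δ a b f ⊔ rMod δ b c f := by
  by_contra hcon
  push_neg at hcon
  have hab : rMod δ a b f < rMod δ a c f := lt_of_le_of_lt le_sup_left hcon
  have hbc : rMod δ b c f < rMod δ a c f := lt_of_le_of_lt le_sup_right hcon
  rw [rMod] at hab hbc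
  simp only [iInf_lt_iff] at hab hbc
  obtain ⟨k₁, t₁, h₁, hs₁⟩ := hab
  obtain ⟨k₂, t₂, h₂, hs₂⟩ := hbc
  set tc : ℕ → ℝ := fun n => if n < k₁ then t₁ n else t₂ (n - k₁) with htc
  have htc₁ : ∀ n ≤ k₁, tc n = t₁ n := by
    intro n hn
    rcases lt_or_eq_of_le hn with h | h
    · simp [htc, h]
    · subst h
      simp [htc, h₁.1.2.2.1, h₂.1.2.1]
  have htc₂ : ∀ n, k₁ ≤ n → tc n = t₂ (n - k₁) := by
    intro n hn
    simp [htc, Nat.not_lt.2 hn]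
  have hpart : IsPart a c δ (k₁ + k₂) tc ∧
      ∀ i < k₁ + k₂, tc (i + 1) - tc i ≤ 2 * δ := by
    have hgaps : ∀ i < k₁ + k₂,
        (δ < tc (i + 1) - tc i) ∧ tc (i + 1) - tc i ≤ 2 * δ := by
      intro i hi
      rcases lt_or_ge i k₁ with h | h
      · rw [htc₁ i (le_of_lt h), htc₁ (i + 1) (Nat.succ_le_of_lt h)]
        exact ⟨h₁.1.2.2.2 i h, h₁.2 i h⟩
      · rw [htc₂ i h, htc₂ (i + 1) (le_trans h (Nat.le_succ i))]
        have he : i + 1 - k₁ = (i - k₁) + 1 := by omega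
        have hlt : i - k₁ < k₂ := by omega
        rw [he]
        exact ⟨h₂.1.2.2.2 _ hlt, h₂.2 _ hlt⟩
    refine ⟨⟨Nat.add_pos_left h₁.1.1 k₂, ?_, ?_, fun i hi => (hgaps i hi).1⟩, fun i hi => (hgaps i hi).2⟩
    · rw [htc₁ 0 (Nat.zero_le _)]; exact h₁.1.2.1
    · rw [htc₂ (k₁ + k₂) (Nat.le_add_right _ _), Nat.add_sub_cancel_left]
      exact h₂.1.2.2.1
  have hle : rMod δ a c f ≤ ⨆ i : Fin (k₁ + k₂), osc f (tc i) (tc (i + 1)) :=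
    iInf_le_of_le (k₁ + k₂) (iInf_le_of_le tc (iInf_le_of_le hpart le_rfl))
  have hsup : (⨆ i : Fin (k₁ + k₂), osc f (tc i) (tc (i + 1)))
      ≤ (⨆ i : Fin k₁, osc f (t₁ i) (t₁ (i + 1)))
        ⊔ (⨆ i : Fin k₂, osc f (t₂ i) (t₂ (i + 1))) := by
    refine iSup_le fun i => ?_
    rcases lt_or_ge i.1 k₁ with h | h
    · rw [htc₁ i.1 (le_of_lt h), htc₁ (i.1 + 1) (Nat.succ_le_of_lt h)]
      exact le_sup_of_le_left (le_iSup_of_le ⟨i.1, h⟩ le_rfl)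
    · rw [htc₂ i.1 h, htc₂ (i.1 + 1) (le_trans h (Nat.le_succ _))]
      have he : i.1 + 1 - k₁ = (i.1 - k₁) + 1 := by omega
      have hlt : i.1 - k₁ < k₂ := by omega
      rw [he]
      exact le_sup_of_le_right (le_iSup_of_le ⟨i.1 - k₁, hlt⟩ le_rfl)
  have : rMod δ a c f < rMod δ a c f :=
    lt_of_le_of_lt (le_trans hle hsup) (sup_lt_iff.2 ⟨hs₁, hs₂⟩)
  exact lt_irrefl _ this

lemma rMod_le_part {δ : ℝ} (hδ : 0 < δ) (f : ℝ → ℝ) :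
    ∀ (k : ℕ) (a b : ℝ) (t : ℕ → ℝ), IsPart a b δ k t →
      rMod δ a b f ≤ ⨆ i : Fin k, osc f (t i) (t (i + 1)) := by
  intro k
  induction k with
  | zero => exact fun a b t h => absurd h.1 (lt_irrefl 0)
  | succ k ih =>
    intro a b t h
    rcases Nat.eq_zero_or_pos k with hk | hk
    · subst hk
      have hgap : δ < b - a := by
        have := h.2.2.2 0 (by norm_num)
        rwa [h.2.1, h.2.2.1] at this
      refine le_trans (rMod_le_osc hδ hgap f) ?_
      have : osc f a b = osc f (t 0) (t 1) := by rw [h.2.1, h.2.2.1]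
      rw [this]
      exact le_iSup_of_le ⟨0, by norm_num⟩ le_rfl
    · have h1 : IsPart a (t k) δ k t :=
        ⟨hk, h.2.1, rfl, fun i hi => h.2.2.2 i (Nat.lt_succ_of_lt hi)⟩
      have h2 : δ < b - t k := by
        have := h.2.2.2 k (Nat.lt_succ_self k)
        rwa [h.2.2.1] at this
      calc rMod δ a b f ≤ rMod δ a (t k) f ⊔ rMod δ (t k) b f := rMod_le_sup δ a (t k) b f
        _ ≤ (⨆ i : Fin k, osc f (t i) (t (i + 1))) ⊔ osc f (t k) b :=
            sup_le_sup (ih a (t k) t h1) (rMod_le_osc hδ h2 f)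
        _ ≤ ⨆ i : Fin (k + 1), osc f (t i) (t (i + 1)) := by
            refine sup_le (iSup_le fun i => le_iSup_of_le ⟨i.1, Nat.lt_succ_of_lt i.2⟩ le_rfl) ?_
            have : osc f (t k) b = osc f (t k) (t (k + 1)) := by rw [h.2.2.1]
            rw [this]
            exact le_iSup_of_le ⟨k, Nat.lt_succ_self k⟩ le_rfl

end CadlagMod

/-- in the definition of `ω'_f(δ)` it suffices to take the infimum over
partitions whose gaps lie in `(δ, 2δ]`. -/
theorem statement8
    (r₀ R : ℝ) (hr₀ : 0 ≤ r₀) (hr₀R : r₀ < R)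
    (δ : ℝ) (hδ : 0 < δ) (hδR : δ < R - r₀) (f : ℝ → ℝ) :
    cadlagMod r₀ R f δ
      = ⨅ (k : ℕ) (t : ℕ → ℝ)
          (_ : IsPart r₀ R δ k t ∧ ∀ i < k, t (i + 1) - t i ≤ 2 * δ),
          ⨆ i : Fin k, osc f (t i) (t (i + 1)) := by
  have hrhs : (⨅ (k : ℕ) (t : ℕ → ℝ)
      (_ : IsPart r₀ R δ k t ∧ ∀ i < k, t (i + 1) - t i ≤ 2 * δ),
      ⨆ i : Fin k, osc f (t i) (t (i + 1))) = rMod δ r₀ R f := rfl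
  rw [hrhs]
  refine le_antisymm ?_ ?_
  · refine le_iInf fun k => le_iInf fun t => le_iInf fun h => ?_
    exact iInf_le_of_le k (iInf_le_of_le t (iInf_le_of_le h.1 le_rfl))
  · refine le_iInf fun k => le_iInf fun t => le_iInf fun h => ?_
    exact rMod_le_part hδ f k r₀ R t h
end
end

section
/- Let d ≥ 1, let φ : [0,∞) → [0,∞) be measurable with ∫₀^∞ φ(r) r^{d−1} dr < ∞, and let g : ℝ^d → ℝ and g^{(4)} : (ℝ^d)⁴ → ℝ be measurable functions satisfying |g^{(4)}(0,u₁,u₄,u₂+u₄) − g(u₁)g(u₂)| ≤ φ(min(‖u₄‖, ‖u₄−u₁‖, ‖u₄+u₂‖, ‖u₄+u₂−u₁‖)) for all u₁, u₂, u₄ ∈ ℝ^d. Then sup_{u₁,u₂∈ℝ^d} ∫_{ℝ^d} |g^{(4)}(0,u₁,u₄,u₂+u₄) − g(u₁)g(u₂)| du₄ < ∞. -/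
open MeasureTheory ENNReal

open Set Metric in
private lemma key_norm_lintegral' {d : ℕ} (hd : 1 ≤ d)
    (φ : ℝ → ℝ) (hφmeas : Measurable φ) (hφ0 : ∀ r : ℝ, 0 ≤ r → 0 ≤ φ r)
    (hφint : ∫⁻ r in Set.Ioi (0 : ℝ), ENNReal.ofReal (φ r * r ^ (d - 1)) < ⊤) :
    ∫⁻ x : EuclideanSpace ℝ (Fin d), ENNReal.ofReal (φ ‖x‖) < ⊤ := by
  haveI : Nonempty (Fin d) := ⟨⟨0, hd⟩⟩
  haveI : Nontrivial (EuclideanSpace ℝ (Fin d)) := by infer_instance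
  set E := EuclideanSpace ℝ (Fin d)
  set μ : Measure E := volume with hμ
  set F : ℝ → ℝ≥0∞ := fun r => ENNReal.ofReal (φ r) with hF
  have hFmeas : Measurable F := ENNReal.measurable_ofReal.comp hφmeas
  have hdim : Module.finrank ℝ E = d := finrank_euclideanSpace_fin
  set ν : Measure (sphere (0:E) 1 × Ioi (0:ℝ)) :=
    μ.toSphere.prod (.volumeIoiPow (Module.finrank ℝ E - 1)) with hν
  set C : ℝ≥0∞ := ∫⁻ r : Ioi (0 : ℝ), F r.1 ∂(Measure.volumeIoiPow (Module.finrank ℝ E - 1))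
    with hC
  have hCfin : C < ⊤ := by
    have hg : Measurable fun r : Ioi (0:ℝ) => F r.1 := hFmeas.comp measurable_subtype_coe
    have hpow : Measurable fun r : Ioi (0:ℝ) => ENNReal.ofReal (r.1 ^ (Module.finrank ℝ E - 1)) :=
      (measurable_subtype_coe.pow_const _).ennreal_ofReal
    rw [hC, Measure.volumeIoiPow, lintegral_withDensity_eq_lintegral_mul _ hpow hg]
    have h3 : ∫⁻ r : Ioi (0 : ℝ),
        ((fun r : Ioi (0:ℝ) => ENNReal.ofReal (r.1 ^ (Module.finrank ℝ E - 1))) *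
          fun r : Ioi (0:ℝ) => F r.1) r ∂(Measure.comap Subtype.val volume)
        = ∫⁻ r in Ioi (0 : ℝ), ENNReal.ofReal (r ^ (Module.finrank ℝ E - 1)) * F r :=
      lintegral_subtype_comap measurableSet_Ioi
        (fun r => ENNReal.ofReal (r ^ (Module.finrank ℝ E - 1)) * F r)
    rw [h3, hdim]
    have h4 : ∀ r ∈ Ioi (0 : ℝ),
        ENNReal.ofReal (r ^ (d - 1)) * F r = ENNReal.ofReal (φ r * r ^ (d - 1)) := by
      intro r hr
      rw [hF, ENNReal.ofReal_mul (hφ0 r hr.out.le), mul_comm]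
    rw [setLIntegral_congr_fun measurableSet_Ioi h4]
    exact hφint
  have hmeas2 : Measurable fun p : sphere (0:E) 1 × Ioi (0:ℝ) => F p.2.1 :=
    hFmeas.comp (measurable_subtype_coe.comp measurable_snd)
  have h5 : ∫⁻ p : sphere (0:E) 1 × Ioi (0:ℝ), F p.2.1 ∂ν = μ.toSphere univ * C := by
    rw [hν, lintegral_prod _ hmeas2.aemeasurable]
    simp only [← hC]
    rw [lintegral_const, mul_comm]
  have h1 : ∫⁻ x : E, F ‖x‖ ∂μ = ∫⁻ p : sphere (0:E) 1 × Ioi (0:ℝ), F p.2.1 ∂ν := by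
    calc ∫⁻ x : E, F ‖x‖ ∂μ
        = ∫⁻ x in ({0}ᶜ : Set E), F ‖x‖ ∂μ := by
          rw [MeasureTheory.restrict_compl_singleton]
      _ = ∫⁻ x : ({0}ᶜ : Set E), F ‖x.1‖ ∂(μ.comap (↑)) :=
          (lintegral_subtype_comap (measurableSet_singleton (0:E)).compl
            (fun x => F ‖x‖)).symm
      _ = ∫⁻ p : sphere (0:E) 1 × Ioi (0:ℝ), F p.2.1 ∂ν :=
          by rw [hν, ← μ.measurePreserving_homeomorphUnitSphereProd.lintegral_comp hmeas2]
             simp [homeomorphUnitSphereProd, homeomorphSphereProd_apply_snd_coe]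
  rw [show (fun x : E => ENNReal.ofReal (φ ‖x‖)) = fun x : E => F ‖x‖ from rfl] at *
  rw [h1, h5]
  exact ENNReal.mul_lt_top (measure_lt_top _ _) hCfin

private lemma min4_ofReal_le' (φ : ℝ → ℝ) (a b c e : ℝ) :
    ENNReal.ofReal (φ (min (min a b) (min c e)))
      ≤ ENNReal.ofReal (φ a) + ENNReal.ofReal (φ b)
        + ENNReal.ofReal (φ c) + ENNReal.ofReal (φ e) := by
  rcases min_cases (min a b) (min c e) with ⟨h, _⟩ | ⟨h, _⟩ <;> rw [h]
  · rcases min_cases a b with ⟨h2, _⟩ | ⟨h2, _⟩ <;> rw [h2]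
    · exact le_add_right (le_add_right (self_le_add_right _ _))
    · exact le_add_right (le_add_right (self_le_add_left _ _))
  · rcases min_cases c e with ⟨h2, _⟩ | ⟨h2, _⟩ <;> rw [h2]
    · exact le_add_right (self_le_add_left _ _)
    · exact self_le_add_left _ _

noncomputable section

/-- fast decay of correlations for `(p,q) = (2,2)` implies
`sup_{u₁,u₂} ∫ |g⁴(0,u₁,u₄,u₂+u₄) − g(u₁)g(u₂)| du₄ < ∞`. -/
theorem statement11
    {d : ℕ} (hd : 1 ≤ d)
    (φ : ℝ → ℝ) (hφmeas : Measurable φ) (hφ0 : ∀ r : ℝ, 0 ≤ r → 0 ≤ φ r)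
    (hφint : ∫⁻ r in Set.Ioi (0 : ℝ), ENNReal.ofReal (φ r * r ^ (d - 1)) < ⊤)
    (g : EuclideanSpace ℝ (Fin d) → ℝ) (hgmeas : Measurable g)
    (g4 : EuclideanSpace ℝ (Fin d) → EuclideanSpace ℝ (Fin d) →
      EuclideanSpace ℝ (Fin d) → EuclideanSpace ℝ (Fin d) → ℝ)
    (hg4meas : Measurable fun q : EuclideanSpace ℝ (Fin d) ×
      EuclideanSpace ℝ (Fin d) × EuclideanSpace ℝ (Fin d) × EuclideanSpace ℝ (Fin d) =>
      g4 q.1 q.2.1 q.2.2.1 q.2.2.2)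
    (hbound : ∀ u₁ u₂ u₄ : EuclideanSpace ℝ (Fin d),
      |g4 0 u₁ u₄ (u₂ + u₄) - g u₁ * g u₂|
        ≤ φ (min (min ‖u₄‖ ‖u₄ - u₁‖) (min ‖u₄ + u₂‖ ‖u₄ + u₂ - u₁‖))) :
    (⨆ u₁ : EuclideanSpace ℝ (Fin d), ⨆ u₂ : EuclideanSpace ℝ (Fin d),
      ∫⁻ u₄ : EuclideanSpace ℝ (Fin d),
        ENNReal.ofReal |g4 0 u₁ u₄ (u₂ + u₄) - g u₁ * g u₂|) < ⊤ := by
  let E := EuclideanSpace ℝ (Fin d)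
  set f : E → ℝ≥0∞ := fun x => ENNReal.ofReal (φ ‖x‖) with hf
  have hfmeas : Measurable f := (hφmeas.comp measurable_norm).ennreal_ofReal
  have hI : ∫⁻ x : E, f x < ⊤ := key_norm_lintegral' hd φ hφmeas hφ0 hφint
  set I : ℝ≥0∞ := ∫⁻ x : E, f x with hIdef
  have hIfin : I < ⊤ := hI
  have main : ∀ u₁ u₂ : E,
      (∫⁻ u₄ : E, ENNReal.ofReal |g4 0 u₁ u₄ (u₂ + u₄) - g u₁ * g u₂|)
        ≤ I + I + I + I := by
    intro u₁ u₂
    have hm1 : Measurable fun u : E => f (u - u₁) := hfmeas.comp (by fun_prop)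
    have hm2 : Measurable fun u : E => f (u + u₂) := hfmeas.comp (by fun_prop)
    have hm3 : Measurable fun u : E => f (u + u₂ - u₁) := hfmeas.comp (by fun_prop)
    calc (∫⁻ u₄ : E, ENNReal.ofReal |g4 0 u₁ u₄ (u₂ + u₄) - g u₁ * g u₂|)
        ≤ ∫⁻ u₄ : E, (f u₄ + f (u₄ - u₁) + f (u₄ + u₂) + f (u₄ + u₂ - u₁)) := by
          refine lintegral_mono fun u₄ => ?_
          refine le_trans (ENNReal.ofReal_le_ofReal (hbound u₁ u₂ u₄)) ?_
          exact min4_ofReal_le' φ _ _ _ _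
      _ = (∫⁻ u₄ : E, (f u₄ + f (u₄ - u₁) + f (u₄ + u₂)))
            + ∫⁻ u₄ : E, f (u₄ + u₂ - u₁) := lintegral_add_right _ hm3
      _ = ((∫⁻ u₄ : E, (f u₄ + f (u₄ - u₁))) + ∫⁻ u₄ : E, f (u₄ + u₂))
            + ∫⁻ u₄ : E, f (u₄ + u₂ - u₁) := by rw [lintegral_add_right _ hm2]
      _ = (((∫⁻ u₄ : E, f u₄) + ∫⁻ u₄ : E, f (u₄ - u₁)) + ∫⁻ u₄ : E, f (u₄ + u₂))
            + ∫⁻ u₄ : E, f (u₄ + u₂ - u₁) := by rw [lintegral_add_right _ hm1]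
      _ = I + I + I + I := by
          rw [show (fun u₄ : E => f (u₄ + u₂ - u₁)) = fun u₄ : E => f (u₄ + (u₂ - u₁))
              from funext fun u => by rw [add_sub_assoc],
            lintegral_sub_right_eq_self f u₁, lintegral_add_right_eq_self f u₂,
            lintegral_add_right_eq_self f (u₂ - u₁)]
  refine lt_of_le_of_lt (iSup_le fun u₁ => iSup_le fun u₂ => main u₁ u₂) ?_
  exact ENNReal.add_lt_top.2 ⟨ENNReal.add_lt_top.2 ⟨ENNReal.add_lt_top.2 ⟨hIfin, hIfin⟩, hIfin⟩, hIfin⟩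
end
end

section
/- Let d, p ≥ 1, let z : ℝ^d → ℝ^p and ρ : ℝ^d → (0,∞) be bounded measurable functions, and let g : ℝ^d → ℝ be measurable with ∫_{ℝ^d} |g(v) − 1| dv < ∞. Suppose that for every v ∈ ℝ^d the averages m_n(v) := |W_n|^{−1} ∫_{W_n} z(u) z(u−v)ᵀ ρ(u) ρ(u−v) du converge, as n → ∞, to a p×p matrix s(v). Then ∫_{ℝ^d} (g(v) − 1) · |W_n|^{−1} ∫_{W_n ∩ W_{n,v}} z(u) z(u−v)ᵀ ρ(u) ρ(u−v) du dv converges, as n → ∞, to ∫_{ℝ^d} (g(v) − 1) s(v) dv. -/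
/-! The set `W_n ∩ W_{n,v}` is a box with sides `n^{1/d} - |v_i|`, so its volume is the fraction
`∏ᵢ (1 - |v_i| n^{-1/d})⁺ → 1` of `|W_n| = n`. For a kernel bounded by `C`, restricting the average
over `W_n` to `W_n ∩ W_{n,v}` changes it by at most `C (1 - |W_n ∩ W_{n,v}| / n) → 0`, so the
truncated averages also converge to `s(v)`. They are bounded by `C` uniformly in `n` and `v`, and
dominated convergence against the integrable weight `g - 1` concludes. -/

open MeasureTheory Filter Topology

noncomputable section

open KFunCLT

open Set Function

section SetIntegral

variable {α E : Type*} [MeasurableSpace α] [NormedAddCommGroup E] [NormedSpace ℝ E]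

theorem norm_setIntegral_sub_setIntegral_inter_le {μ : Measure α} {f : α → E} {s t : Set α}
    {C : ℝ} (ht : MeasurableSet t) (hs : μ s < ⊤) (hf : IntegrableOn f s μ)
    (hC : ∀ x ∈ s, ‖f x‖ ≤ C) :
    ‖∫ x in s, f x ∂μ - ∫ x in s ∩ t, f x ∂μ‖ ≤ C * (μ.real s - μ.real (s ∩ t)) := by
  rw [← integral_inter_add_sdiff ht hf, add_sub_cancel_left,
    ← measureReal_inter_add_sdiff ht hs.ne, add_sub_cancel_left]
  exact norm_setIntegral_le_of_norm_le_const ((measure_mono sdiff_subset).trans_lt hs)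
    fun x hx => hC x hx.1

theorem MeasureTheory.StronglyMeasurable.setIntegral_prodMk_preimage {β : Type*} [MeasurableSpace β]
    {ν : Measure β} [SFinite ν] {f : α × β → E} (hf : StronglyMeasurable f)
    {S : Set (α × β)} (hS : MeasurableSet S) :
    StronglyMeasurable fun a => ∫ b in Prod.mk a ⁻¹' S, f (a, b) ∂ν := by
  have h (a : α) : ∫ b in Prod.mk a ⁻¹' S, f (a, b) ∂ν = ∫ b, S.indicator f (a, b) ∂ν := by
    rw [← integral_indicator (measurable_prodMk_left hS)]; rfl
  simpa only [h] using (hf.indicator hS).integral_prod_right'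

end SetIntegral

namespace KFunCLT

variable {d : ℕ}

def box (lo hi : Fin d → ℝ) : Set (Pt d) :=
  WithLp.ofLp ⁻¹' univ.pi fun i => Icc (lo i) (hi i)

theorem measurableSet_box (lo hi : Fin d → ℝ) : MeasurableSet (box lo hi) :=
  WithLp.measurable_ofLp 2 _ (MeasurableSet.univ_pi fun _ => measurableSet_Icc)

theorem volume_box (lo hi : Fin d → ℝ) :
    volume (box lo hi) = ∏ i, ENNReal.ofReal (hi i - lo i) := by
  rw [box, (PiLp.volume_preserving_ofLp (Fin d)).measure_preimage
    (MeasurableSet.univ_pi fun _ => measurableSet_Icc).nullMeasurableSet, volume_pi_pi]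
  simp only [Real.volume_Icc]

theorem volume_box_lt_top (lo hi : Fin d → ℝ) : volume (box lo hi) < ⊤ := by
  rw [volume_box]
  exact ENNReal.prod_lt_top fun _ _ => ENNReal.ofReal_lt_top

theorem volume_real_box (lo hi : Fin d → ℝ) :
    volume.real (box lo hi) = ∏ i, max (hi i - lo i) 0 := by
  simp only [measureReal_def, volume_box, ENNReal.toReal_prod, ENNReal.toReal_ofReal']

theorem box_inter_box (lo hi lo' hi' : Fin d → ℝ) :
    box lo hi ∩ box lo' hi' = box (lo ⊔ lo') (hi ⊓ hi') := by
  ext x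
  simp only [box, mem_inter_iff, mem_preimage, mem_univ_pi, ← forall_and, Icc_inter_Icc.symm,
    Pi.sup_apply, Pi.inf_apply]

def windowSide (d n : ℕ) : ℝ := (n : ℝ) ^ ((1 : ℝ) / d)

theorem windowSide_pow (hd : 1 ≤ d) (n : ℕ) : windowSide d n ^ d = n := by
  rw [windowSide, ← Real.rpow_natCast, ← Real.rpow_mul n.cast_nonneg,
    one_div_mul_cancel (by positivity), Real.rpow_one]

theorem tendsto_windowSide (hd : 1 ≤ d) : Tendsto (windowSide d) atTop atTop :=
  (tendsto_rpow_atTop (by positivity)).comp tendsto_natCast_atTop_atTop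

theorem Wn_eq_box (n : ℕ) :
    Wn d n = box (fun _ => -(windowSide d n / 2)) (fun _ => windowSide d n / 2) := by
  ext x
  simp only [Wn, box, mem_ofPred_eq, mem_preimage, mem_univ_pi, mem_Icc, ← abs_le]
  rfl

theorem mem_WnT_iff {n : ℕ} {v u : Pt d} : u ∈ WnT d n v ↔ u - v ∈ Wn d n :=
  ⟨by rintro ⟨x, hx, rfl⟩; simpa using hx, fun hu => ⟨u - v, hu, sub_add_cancel u v⟩⟩

theorem WnT_eq_box (n : ℕ) (v : Pt d) :
    WnT d n v = box (fun i => v i - windowSide d n / 2) (fun i => v i + windowSide d n / 2) := by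
  ext u
  simp only [mem_WnT_iff, Wn_eq_box, box, mem_preimage, mem_univ_pi, mem_Icc, WithLp.ofLp_sub,
    Pi.sub_apply]
  refine forall_congr' fun i => ?_
  constructor <;> rintro ⟨h₁, h₂⟩ <;> constructor <;> linarith

theorem measurableSet_Wn (n : ℕ) : MeasurableSet (Wn d n) := by
  rw [Wn_eq_box]; exact measurableSet_box _ _

theorem measurableSet_WnT (n : ℕ) (v : Pt d) : MeasurableSet (WnT d n v) := by
  rw [WnT_eq_box]; exact measurableSet_box _ _

theorem volume_Wn_lt_top (n : ℕ) : volume (Wn d n) < ⊤ := by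
  rw [Wn_eq_box]; exact volume_box_lt_top _ _

theorem volume_real_Wn (hd : 1 ≤ d) (n : ℕ) : volume.real (Wn d n) = n := by
  have hside : 0 ≤ windowSide d n := Real.rpow_nonneg n.cast_nonneg _
  rw [Wn_eq_box, volume_real_box, ← windowSide_pow hd n]
  simp only [sub_neg_eq_add, add_halves, max_eq_left hside, Finset.prod_const, Finset.card_univ,
    Fintype.card_fin]

theorem volume_real_Wn_inter_WnT (n : ℕ) (v : Pt d) :
    volume.real (Wn d n ∩ WnT d n v) = ∏ i, max (windowSide d n - |v i|) 0 := by
  rw [Wn_eq_box, WnT_eq_box, box_inter_box, volume_real_box]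
  congr! 2 with i
  simp only [Pi.sup_apply, Pi.inf_apply]
  rcases abs_cases (v i) with ⟨h, _⟩ | ⟨h, _⟩ <;> rw [h] <;>
    simp only [min_def, max_def] <;> split_ifs <;> linarith

theorem tendsto_inv_mul_volume_real_Wn_inter_WnT (hd : 1 ≤ d) (v : Pt d) :
    Tendsto (fun n : ℕ => (n : ℝ)⁻¹ * volume.real (Wn d n ∩ WnT d n v)) atTop (𝓝 1) := by
  have hlim : Tendsto (fun n : ℕ => ∏ i, max (1 - |v i| * (windowSide d n)⁻¹) 0) atTop (𝓝 1) := by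
    have hinv := (tendsto_windowSide hd).inv_tendsto_atTop
    simpa using tendsto_finsetProd Finset.univ fun i _ =>
      ((tendsto_const_nhds (x := (1 : ℝ))).sub (hinv.const_mul |v i|)).max
        (tendsto_const_nhds (x := (0 : ℝ)))
  refine hlim.congr' ?_
  filter_upwards [eventually_ge_atTop 1] with n hn
  have ha : 0 < windowSide d n := Real.rpow_pos_of_pos (by exact_mod_cast hn) _
  rw [volume_real_Wn_inter_WnT, ← windowSide_pow hd n, ← inv_pow, ← Fin.prod_const,
    ← Finset.prod_mul_distrib]
  refine Finset.prod_congr rfl fun i _ => ?_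
  rw [mul_max_of_nonneg _ _ (inv_nonneg.2 ha.le), mul_zero, mul_sub, inv_mul_cancel₀ ha.ne',
    mul_comm]

section Averages

variable {f : Pt d → ℝ} {C : ℝ}

theorem norm_inv_mul_setIntegral_Wn_inter_WnT_le (hd : 1 ≤ d) (hC : ∀ x, ‖f x‖ ≤ C) (n : ℕ)
    (v : Pt d) : ‖(n : ℝ)⁻¹ * ∫ u in Wn d n ∩ WnT d n v, f u‖ ≤ C := by
  have hC0 : 0 ≤ C := (norm_nonneg _).trans (hC 0)
  have hvol : volume.real (Wn d n ∩ WnT d n v) ≤ n :=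
    volume_real_Wn hd n ▸ measureReal_mono inter_subset_left (volume_Wn_lt_top n).ne
  have hint : ‖∫ u in Wn d n ∩ WnT d n v, f u‖ ≤ C * volume.real (Wn d n ∩ WnT d n v) :=
    norm_setIntegral_le_of_norm_le_const
      ((measure_mono inter_subset_left).trans_lt (volume_Wn_lt_top n)) fun u _ => hC u
  rw [norm_mul, norm_inv, Real.norm_natCast]
  rcases n.eq_zero_or_pos with rfl | hn
  · simpa using hC0
  calc (n : ℝ)⁻¹ * ‖∫ u in Wn d n ∩ WnT d n v, f u‖ ≤ (n : ℝ)⁻¹ * (C * n) := by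
        gcongr; exact hint.trans (by gcongr)
    _ = C := by field_simp

theorem tendsto_inv_mul_setIntegral_Wn_inter_WnT (hd : 1 ≤ d) (hf : AEStronglyMeasurable f)
    (hC : ∀ x, ‖f x‖ ≤ C) (v : Pt d) {L : ℝ}
    (h : Tendsto (fun n : ℕ => (n : ℝ)⁻¹ * ∫ u in Wn d n, f u) atTop (𝓝 L)) :
    Tendsto (fun n : ℕ => (n : ℝ)⁻¹ * ∫ u in Wn d n ∩ WnT d n v, f u) atTop (𝓝 L) := by
  have hbound : Tendsto (fun n : ℕ => C * (1 - (n : ℝ)⁻¹ * volume.real (Wn d n ∩ WnT d n v)))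
      atTop (𝓝 0) := by
    simpa using ((tendsto_inv_mul_volume_real_Wn_inter_WnT hd v).const_sub 1).const_mul C
  have herr : Tendsto (fun n : ℕ => (n : ℝ)⁻¹ * (∫ u in Wn d n, f u) -
      (n : ℝ)⁻¹ * ∫ u in Wn d n ∩ WnT d n v, f u) atTop (𝓝 0) := by
    refine squeeze_zero_norm' ?_ hbound
    filter_upwards [eventually_ge_atTop 1] with n hn₁
    have hn : (n : ℝ) ≠ 0 := by positivity
    rw [← mul_sub, norm_mul, norm_inv, Real.norm_natCast]
    calc _ ≤ (n : ℝ)⁻¹ * (C * (volume.real (Wn d n) - volume.real (Wn d n ∩ WnT d n v))) := by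
          gcongr
          exact norm_setIntegral_sub_setIntegral_inter_le (measurableSet_WnT n v)
            (volume_Wn_lt_top n)
            (Measure.integrableOn_of_bounded (volume_Wn_lt_top n).ne hf (ae_of_all _ hC))
            fun x _ => hC x
      _ = C * (1 - (n : ℝ)⁻¹ * volume.real (Wn d n ∩ WnT d n v)) := by
          rw [volume_real_Wn hd]; field_simp
  simpa using h.sub herr

end Averages

theorem stronglyMeasurable_setIntegral_Wn_inter_WnT {K : Pt d → Pt d → ℝ}
    (hK : Measurable (uncurry K)) (n : ℕ) :
    StronglyMeasurable fun v => ∫ u in Wn d n ∩ WnT d n v, K v u := by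
  have hS : MeasurableSet {q : Pt d × Pt d | q.2 ∈ Wn d n ∧ q.2 - q.1 ∈ Wn d n} :=
    (measurable_snd (measurableSet_Wn n)).inter
      ((measurable_snd.sub measurable_fst) (measurableSet_Wn n))
  have hsection (v : Pt d) :
      Prod.mk v ⁻¹' {q : Pt d × Pt d | q.2 ∈ Wn d n ∧ q.2 - q.1 ∈ Wn d n} = Wn d n ∩ WnT d n v := by
    ext u
    exact and_congr_right' mem_WnT_iff.symm
  simpa only [hsection, uncurry_apply_pair] using
    hK.stronglyMeasurable.setIntegral_prodMk_preimage (ν := volume) hS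

end KFunCLT

theorem statement13_general
    {d p : ℕ} (hd : 1 ≤ d)
    (z : Pt d → EuclideanSpace ℝ (Fin p)) (hzmeas : Measurable z)
    (hzbdd : ∃ M : ℝ, ∀ x, ‖z x‖ ≤ M)
    (ρ : Pt d → ℝ) (hρmeas : Measurable ρ) (hρpos : ∀ x, 0 < ρ x)
    (hρbdd : ∃ M : ℝ, ∀ x, ρ x ≤ M)
    (g : Pt d → ℝ)
    (hgint : Integrable (fun v => g v - 1))
    (s : Pt d → Fin p → Fin p → ℝ)
    (hm : ∀ v : Pt d, ∀ i j : Fin p,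
      Tendsto (fun n : ℕ =>
          ((n : ℝ))⁻¹ * ∫ u in Wn d n, z u i * z (u - v) j * ρ u * ρ (u - v))
        atTop (𝓝 (s v i j))) :
    ∀ i j : Fin p,
      Tendsto (fun n : ℕ => ∫ v, (g v - 1) *
          (((n : ℝ))⁻¹ *
            ∫ u in Wn d n ∩ WnT d n v, z u i * z (u - v) j * ρ u * ρ (u - v)))
        atTop (𝓝 (∫ v, (g v - 1) * s v i j)) := by
  intro i j
  obtain ⟨Mz, hMz⟩ := hzbdd
  obtain ⟨Mρ, hMρ⟩ := hρbdd
  set K : Pt d → Pt d → ℝ := fun v u => z u i * z (u - v) j * ρ u * ρ (u - v)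
  have hK : Measurable (uncurry K) := by fun_prop
  have hz (x : Pt d) (k : Fin p) : ‖z x k‖ ≤ Mz := (PiLp.norm_apply_le (z x) k).trans (hMz x)
  have hρ (x : Pt d) : ‖ρ x‖ ≤ Mρ := (Real.norm_of_nonneg (hρpos x).le).trans_le (hMρ x)
  have hKbdd (v u : Pt d) : ‖K v u‖ ≤ Mz * Mz * Mρ * Mρ := by
    have := (norm_nonneg _).trans (hz u i)
    have := (norm_nonneg _).trans (hρ u)
    simp only [K, norm_mul]
    gcongr <;> apply_assumption
  refine tendsto_integral_of_dominated_convergence (fun v => ‖g v - 1‖ * (Mz * Mz * Mρ * Mρ))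
    (fun n => hgint.aestronglyMeasurable.mul
      ((stronglyMeasurable_setIntegral_Wn_inter_WnT hK n).aestronglyMeasurable.const_mul _))
    (hgint.norm.mul_const _) (fun n => ae_of_all _ fun v => ?_) (ae_of_all _ fun v => ?_)
  · rw [norm_mul]
    gcongr
    exact norm_inv_mul_setIntegral_Wn_inter_WnT_le hd (hKbdd v) n v
  · exact (tendsto_inv_mul_setIntegral_Wn_inter_WnT hd
      (hK.comp measurable_prodMk_left).aestronglyMeasurable (hKbdd v) v (hm v i j)).const_mul _

/-- convergence (entrywise) of
`∫ (g(v)−1) |W_n|⁻¹ ∫_{W_n ∩ W_{n,v}} z(u)z(u−v)ᵀ ρ(u)ρ(u−v) du dv`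
to `∫ (g(v)−1) s(v) dv`, given the convergence of the spatial averages
`m_n(v) = |W_n|⁻¹ ∫_{W_n} z(u)z(u−v)ᵀ ρ(u)ρ(u−v) du` to `s(v)`. -/
theorem statement13
    {d p : ℕ} (hd : 1 ≤ d) (hp : 1 ≤ p)
    (z : Pt d → EuclideanSpace ℝ (Fin p)) (hzmeas : Measurable z)
    (hzbdd : ∃ M : ℝ, ∀ x, ‖z x‖ ≤ M)
    (ρ : Pt d → ℝ) (hρmeas : Measurable ρ) (hρpos : ∀ x, 0 < ρ x)
    (hρbdd : ∃ M : ℝ, ∀ x, ρ x ≤ M)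
    (g : Pt d → ℝ) (hgmeas : Measurable g)
    (hgint : Integrable (fun v => g v - 1))
    (s : Pt d → Fin p → Fin p → ℝ)
    (hm : ∀ v : Pt d, ∀ i j : Fin p,
      Tendsto (fun n : ℕ =>
          ((n : ℝ))⁻¹ * ∫ u in Wn d n, z u i * z (u - v) j * ρ u * ρ (u - v))
        atTop (𝓝 (s v i j))) :
    ∀ i j : Fin p,
      Tendsto (fun n : ℕ => ∫ v, (g v - 1) *
          (((n : ℝ))⁻¹ *
            ∫ u in Wn d n ∩ WnT d n v, z u i * z (u - v) j * ρ u * ρ (u - v)))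
        atTop (𝓝 (∫ v, (g v - 1) * s v i j)) :=
  statement13_general hd z hzmeas hzbdd ρ hρmeas hρpos hρbdd g hgint s hm
end
end

section
/- In the constant-intensity setting, lim_{n→∞} n·Var(β̂_n) = β² ∫_{ℝ^d} (g(x) − 1) dx + β. -/
open MeasureTheory Filter Topology ENNReal

noncomputable section

namespace KFunCLT

/-- The standard intensity estimator `β̂_n = #(P ∩ W_n)/|W_n|`. -/
def betahat {Ω : Type*} {d : ℕ} (P : Ω → Set (Pt d)) (n : ℕ) (ω : Ω) : ℝ :=
  ((P ω ∩ Wn d n).ncard : ℝ) / n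

/-- The `K`-function estimator with known constant intensity `β`:
`K̂_n(r) = β⁻² Σ_{x ≠ y ∈ P_n} 1{‖x−y‖ ≤ r} e_n(x,y)`. -/
def KhatC {Ω : Type*} {d : ℕ} (P : Ω → Set (Pt d)) (β : ℝ) (n : ℕ) (r : ℝ)
    (ω : Ω) : ℝ :=
  (β ^ 2)⁻¹ *
    pairSum (P ω ∩ Wn d n) fun x y => if ‖x - y‖ ≤ r then en d n x y else 0

/-- Covariance of two real random variables. -/
def covar {Ω : Type*} [MeasurableSpace Ω] (μ : Measure Ω) (X Y : Ω → ℝ) : ℝ :=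
  ∫ ω, (X ω - ∫ ω', X ω' ∂μ) * (Y ω - ∫ ω', Y ω' ∂μ) ∂μ

end KFunCLT

open KFunCLT

section Aux

lemma cube_vol (d : ℕ) (b : ℝ) (hb : 0 ≤ b) :
    volume {x : Pt d | ∀ i, |x i| ≤ b} = ENNReal.ofReal ((2*b)^d) := by
  have h1 : {x : Pt d | ∀ i, |x i| ≤ b}
      = ((MeasurableEquiv.toLp 2 (Fin d → ℝ)).symm) ⁻¹' (Set.univ.pi fun _ => Set.Icc (-b) b) := by
    ext x
    simp only [Set.mem_setOf_eq, Set.mem_preimage, Set.mem_pi, Set.mem_univ, forall_true_left,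
      Set.mem_Icc, abs_le]
    rfl
  rw [h1, (EuclideanSpace.volume_preserving_symm_measurableEquiv_toLp (Fin d)).measure_preimage
    (by measurability)]
  rw [volume_pi_pi]
  have h2 : b - (-b) = 2*b := by ring
  simp only [Real.volume_Icc, h2, Finset.prod_const, Finset.card_univ, Fintype.card_fin]
  rw [← ENNReal.ofReal_pow (by linarith)]


lemma an_nonneg (d n : ℕ) : 0 ≤ (n : ℝ) ^ ((1 : ℝ) / (d : ℝ)) :=
  Real.rpow_nonneg (Nat.cast_nonneg n) _

lemma Wn_meas (d n : ℕ) : MeasurableSet (Wn d n) := by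
  have : Wn d n = ⋂ i, {x : Pt d | |x i| ≤ (n : ℝ) ^ ((1 : ℝ) / (d : ℝ)) / 2} := by
    ext x; simp [Wn]
  rw [this]
  refine MeasurableSet.iInter fun i => ?_
  have hm : Measurable fun x : Pt d => x i := by
    exact (measurable_pi_apply i).comp (MeasurableEquiv.toLp 2 (Fin d → ℝ)).symm.measurable
  exact measurableSet_le hm.abs measurable_const

lemma Wn_vol (d n : ℕ) (hd : 1 ≤ d) : volume (Wn d n) = n := by
  have h := cube_vol d ((n : ℝ) ^ ((1 : ℝ) / (d : ℝ)) / 2) (by positivity)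
  have h2 : (2 * ((n : ℝ) ^ ((1 : ℝ) / (d : ℝ)) / 2)) = (n : ℝ) ^ ((1 : ℝ) / (d : ℝ)) := by ring
  rw [Wn]
  rw [show {x : Pt d | ∀ i, |x i| ≤ (n : ℝ) ^ ((1 : ℝ) / (d : ℝ)) / 2}
    = {x : Pt d | ∀ i, |x i| ≤ (n : ℝ) ^ ((1 : ℝ) / (d : ℝ)) / 2} from rfl, h, h2]
  have h3 : ((n : ℝ) ^ ((1 : ℝ) / (d : ℝ))) ^ d = (n : ℝ) := by
    rw [← Real.rpow_natCast ((n : ℝ) ^ ((1 : ℝ) / (d : ℝ))) d,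
      ← Real.rpow_mul (Nat.cast_nonneg n)]
    rw [one_div, inv_mul_cancel₀ (by exact_mod_cast Nat.one_le_iff_ne_zero.mp hd), Real.rpow_one]
  rw [h3, ENNReal.ofReal_natCast]

noncomputable def Vn (d n : ℕ) (h : Pt d) : ℝ≥0∞ := volume {x : Pt d | x ∈ Wn d n ∧ x - h ∈ Wn d n}

lemma Vn_set_meas (d n : ℕ) (h : Pt d) :
    MeasurableSet {x : Pt d | x ∈ Wn d n ∧ x - h ∈ Wn d n} := by
  exact (Wn_meas d n).inter ((measurable_sub_const h) (Wn_meas d n))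

lemma Vn_le (d n : ℕ) (hd : 1 ≤ d) (h : Pt d) : Vn d n h ≤ n := by
  rw [← Wn_vol d n hd]
  exact measure_mono (fun x hx => hx.1)

lemma Vn_meas (d n : ℕ) : Measurable (Vn d n) := by
  have hS : MeasurableSet {p : Pt d × Pt d | p.2 ∈ Wn d n ∧ p.2 - p.1 ∈ Wn d n} := by
    exact (measurable_snd (Wn_meas d n)).inter ((measurable_snd.sub measurable_fst) (Wn_meas d n))
  exact measurable_measure_prodMk_left (ν := (volume : Measure (Pt d))) hS

lemma key_int (d n : ℕ) (f : Pt d → ℝ≥0∞) (hf : Measurable f) :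
    ∫⁻ x, ∫⁻ y, (Wn d n).indicator 1 x * (Wn d n).indicator 1 y * f (x - y)
      = ∫⁻ h, f h * Vn d n h := by
  have hI : Measurable ((Wn d n).indicator (1 : Pt d → ℝ≥0∞)) :=
    measurable_const.indicator (Wn_meas d n)
  have step1 : ∀ x : Pt d,
      ∫⁻ y, (Wn d n).indicator 1 x * (Wn d n).indicator 1 y * f (x - y)
        = ∫⁻ h, (Wn d n).indicator 1 x * (Wn d n).indicator 1 (x - h) * f h := by
    intro x
    have hmeas : Measurable fun y : Pt d =>
        (Wn d n).indicator 1 x * (Wn d n).indicator 1 y * f (x - y) :=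
      ((measurable_const.mul hI).mul (hf.comp (measurable_const.sub measurable_id)))
    have := (Measure.measurePreserving_sub_left (volume : Measure (Pt d)) x).lintegral_comp hmeas
    rw [← this]
    congr 1
    ext h
    simp [sub_sub_cancel]
  simp_rw [step1]
  rw [lintegral_lintegral_swap]
  · congr 1
    ext h
    have : ∀ x : Pt d, (Wn d n).indicator 1 x * (Wn d n).indicator 1 (x - h) * f h
        = Set.indicator {x : Pt d | x ∈ Wn d n ∧ x - h ∈ Wn d n} (fun _ => f h) x := by
      intro x
      by_cases h1 : x ∈ Wn d n <;> by_cases h2 : x - h ∈ Wn d n <;>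
        simp [Set.indicator, h1, h2]
    simp_rw [this]
    rw [lintegral_indicator_const (Vn_set_meas d n h)]
    rfl
  · apply Measurable.aemeasurable
    apply Measurable.mul
    apply Measurable.mul
    · exact hI.comp measurable_fst
    · exact hI.comp (measurable_fst.sub measurable_snd)
    · exact hf.comp measurable_snd

lemma Vn_total (d n : ℕ) (hd : 1 ≤ d) : ∫⁻ h, Vn d n h = (n : ℝ≥0∞) * n := by
  have := key_int d n (fun _ => 1) measurable_const
  simp only [mul_one, one_mul] at this
  rw [← this]
  have hI1 : Measurable ((Wn d n).indicator (1 : Pt d → ℝ≥0∞)) :=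
    measurable_const.indicator (Wn_meas d n)
  have hI : ∀ x : Pt d, ∫⁻ y, (Wn d n).indicator 1 x * (Wn d n).indicator 1 y
      = (Wn d n).indicator 1 x * n := by
    intro x
    rw [lintegral_const_mul _ hI1]
    congr 1
    rw [lintegral_indicator_one (Wn_meas d n), Wn_vol d n hd]
  simp_rw [hI]
  rw [lintegral_mul_const _ hI1,
    lintegral_indicator_one (Wn_meas d n), Wn_vol d n hd]

lemma coord_le_norm {d : ℕ} (h : Pt d) (i : Fin d) : |h i| ≤ ‖h‖ := by
  rw [EuclideanSpace.norm_eq, ← Real.sqrt_sq_eq_abs]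
  apply Real.sqrt_le_sqrt
  have : ‖h i‖^2 = (h i)^2 := by rw [Real.norm_eq_abs, sq_abs]
  rw [← this]
  exact Finset.single_le_sum (f := fun j => ‖h j‖^2) (fun j _ => sq_nonneg _)
    (Finset.mem_univ i)

noncomputable def cc (d n : ℕ) (h : Pt d) : ℝ := (Vn d n h).toReal / n

lemma cc_nonneg (d n : ℕ) (h : Pt d) : 0 ≤ cc d n h := by
  apply div_nonneg ENNReal.toReal_nonneg (Nat.cast_nonneg n)

lemma Vn_ne_top (d n : ℕ) (hd : 1 ≤ d) (h : Pt d) : Vn d n h ≠ ⊤ :=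
  ne_top_of_le_ne_top (ENNReal.natCast_ne_top n) (Vn_le d n hd h)

lemma cc_le_one (d n : ℕ) (hd : 1 ≤ d) (h : Pt d) : cc d n h ≤ 1 := by
  rcases Nat.eq_zero_or_pos n with rfl | hn
  · simp [cc]
  · rw [cc, div_le_one (by exact_mod_cast hn)]
    have := ENNReal.toReal_mono (ENNReal.natCast_ne_top n) (Vn_le d n hd h)
    simpa using this

lemma cc_meas (d n : ℕ) : Measurable (cc d n) :=
  ((Vn_meas d n).ennreal_toReal).div_const _

lemma an_tendsto (d : ℕ) (hd : 1 ≤ d) :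
    Tendsto (fun n : ℕ => (n : ℝ) ^ ((1 : ℝ) / (d : ℝ))) atTop atTop := by
  apply (tendsto_rpow_atTop (by positivity)).comp tendsto_natCast_atTop_atTop

lemma cc_tendsto (d : ℕ) (hd : 1 ≤ d) (h : Pt d) :
    Tendsto (fun n : ℕ => cc d n h) atTop (𝓝 1) := by
  set a : ℕ → ℝ := fun n => (n : ℝ) ^ ((1 : ℝ) / (d : ℝ)) with ha
  have haT : Tendsto a atTop atTop := an_tendsto d hd
  have hlow : Tendsto (fun n : ℕ => (1 - 2 * ‖h‖ / a n) ^ d) atTop (𝓝 1) := by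
    have h0 : Tendsto (fun n : ℕ => 2 * ‖h‖ / a n) atTop (𝓝 0) :=
      Tendsto.div_atTop tendsto_const_nhds haT
    have h1 : Tendsto (fun n : ℕ => 1 - 2 * ‖h‖ / a n) atTop (𝓝 1) := by
      simpa using tendsto_const_nhds.sub h0
    simpa using h1.pow d
  apply tendsto_of_tendsto_of_tendsto_of_le_of_le' hlow tendsto_const_nhds
  · -- eventually lower ≤ cc
    filter_upwards [haT.eventually_ge_atTop (2 * ‖h‖ + 1), Filter.eventually_ge_atTop 1]
      with n hn hn1
    have han : 0 < a n := by have := norm_nonneg h; linarith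
    have hb : 0 ≤ a n / 2 - ‖h‖ := by linarith
    have hsub : {x : Pt d | ∀ i, |x i| ≤ a n / 2 - ‖h‖}
        ⊆ {x : Pt d | x ∈ Wn d n ∧ x - h ∈ Wn d n} := by
      intro x hx
      constructor
      · intro i
        have := hx i
        have := norm_nonneg h
        simp only [Set.mem_setOf_eq] at hx
        exact le_trans (hx i) (by linarith)
      · intro i
        have h1 := hx i
        have h2 := coord_le_norm h i
        have : |x i - h i| ≤ |x i| + |h i| := abs_sub _ _
        simp only [Set.mem_setOf_eq] at hx h1
        calc |(x - h) i| = |x i - h i| := rfl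
          _ ≤ |x i| + |h i| := abs_sub _ _
          _ ≤ (a n / 2 - ‖h‖) + ‖h‖ := add_le_add h1 h2
          _ = a n / 2 := by ring
    have hV : ENNReal.ofReal ((a n - 2*‖h‖)^d) ≤ Vn d n h := by
      have := measure_mono (μ := (volume : Measure (Pt d))) hsub
      rwa [cube_vol d _ hb, show 2 * (a n / 2 - ‖h‖) = a n - 2*‖h‖ by ring] at this
    have hVr : (a n - 2*‖h‖)^d ≤ (Vn d n h).toReal := by
      have := ENNReal.toReal_mono (Vn_ne_top d n hd h) hV
      rwa [ENNReal.toReal_ofReal (pow_nonneg (by linarith) d)] at this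
    have hnpos : (0:ℝ) < n := by exact_mod_cast hn1
    have hna : (n : ℝ) = (a n)^d := by
      have := Wn_vol d n hd
      -- easier: direct rpow computation
      rw [ha]
      rw [← Real.rpow_natCast ((n : ℝ) ^ ((1 : ℝ) / (d : ℝ))) d,
        ← Real.rpow_mul (Nat.cast_nonneg n),
        one_div, inv_mul_cancel₀ (by exact_mod_cast Nat.one_le_iff_ne_zero.mp hd),
        Real.rpow_one]
    rw [cc]
    calc (1 - 2 * ‖h‖ / a n) ^ d = (a n - 2*‖h‖)^d / n := by
          rw [hna, ← div_pow]; congr 1; field_simp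
      _ ≤ (Vn d n h).toReal / n := by gcongr
  · exact Filter.Eventually.of_forall fun n => cc_le_one d n hd h


lemma tsum_one_ncard {α : Type*} {t : Set α} (ht : t.Finite) :
    ∑' _ : t, (1 : ℝ≥0∞) = (t.ncard : ℝ≥0∞) := by
  have := ht.fintype
  rw [tsum_fintype]
  rw [Finset.sum_const, Finset.card_univ, nsmul_eq_mul, mul_one, Set.fintypeCard_eq_ncard]

lemma count_lemma_a {α : Type*} (s W : Set α) (hfin : (s ∩ W).Finite) :
    ∑' x : s, (W.indicator (1 : α → ℝ≥0∞)) x = ((s ∩ W).ncard : ℝ≥0∞) := by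
  rw [tsum_subtype, Set.indicator_indicator, ← tsum_subtype]
  exact tsum_one_ncard hfin

lemma pairs_inter {α : Type*} (s W : Set α) :
    pairs s ∩ (W ×ˢ W) = pairs (s ∩ W) := by
  ext q
  simp only [pairs, Set.mem_inter_iff, Set.mem_setOf_eq, Set.mem_prod]
  tauto

lemma ncard_pairs {α : Type*} [DecidableEq α] (t : Set α) (ht : t.Finite) :
    (pairs t).ncard = t.ncard * t.ncard - t.ncard := by
  have h1 : pairs t = ↑(ht.toFinset.offDiag) := by
    ext q
    simp [pairs, Finset.mem_offDiag, Set.Finite.mem_toFinset, and_assoc]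
  rw [h1, Set.ncard_coe_finset, Finset.offDiag_card,
    Set.ncard_eq_toFinset_card t ht]

lemma count_lemma_b {α : Type*} [DecidableEq α] (s W : Set α) (hfin : (s ∩ W).Finite) :
    ∑' q : pairs s, (W.indicator (1 : α → ℝ≥0∞) q.val.1 * W.indicator 1 q.val.2)
      = (((s ∩ W).ncard * (s ∩ W).ncard - (s ∩ W).ncard : ℕ) : ℝ≥0∞) := by
  have hprod : ∀ q : α × α, W.indicator (1 : α → ℝ≥0∞) q.1 * W.indicator 1 q.2
      = (W ×ˢ W).indicator (1 : α × α → ℝ≥0∞) q := by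
    intro q
    by_cases h1 : q.1 ∈ W <;> by_cases h2 : q.2 ∈ W <;>
      simp [Set.indicator, Set.mem_prod, h1, h2]
  have hfin2 : (pairs (s ∩ W)).Finite := by
    apply Set.Finite.subset (hfin.prod hfin)
    intro q hq
    exact Set.mem_prod.mpr ⟨hq.1, hq.2.1⟩
  calc ∑' q : pairs s, (W.indicator (1 : α → ℝ≥0∞) q.val.1 * W.indicator 1 q.val.2)
      = ∑' q : pairs s, (W ×ˢ W).indicator (1 : α × α → ℝ≥0∞) q.val := by
        congr 1; ext q; exact hprod q.val
    _ = ∑' q : α × α, (pairs s ∩ (W ×ˢ W)).indicator 1 q := by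
        rw [tsum_subtype, Set.indicator_indicator]
    _ = ∑' q : pairs (s ∩ W), (1 : ℝ≥0∞) := by
        rw [pairs_inter]
        exact (tsum_subtype (pairs (s ∩ W)) (fun _ => 1)).symm
    _ = ((pairs (s ∩ W)).ncard : ℝ≥0∞) := tsum_one_ncard hfin2
    _ = (((s ∩ W).ncard * (s ∩ W).ncard - (s ∩ W).ncard : ℕ) : ℝ≥0∞) := by
        rw [ncard_pairs _ hfin]

lemma Wn_compact (d n : ℕ) : IsCompact (Wn d n) := by
  have h1 : Wn d n = (EuclideanSpace.equiv (Fin d) ℝ).toHomeomorph ⁻¹'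
      (Set.univ.pi fun _ => Set.Icc (-((n : ℝ) ^ ((1 : ℝ) / (d : ℝ)) / 2))
        ((n : ℝ) ^ ((1 : ℝ) / (d : ℝ)) / 2)) := by
    ext x
    simp only [Wn, Set.mem_setOf_eq, Set.mem_preimage, Set.mem_pi, Set.mem_univ,
      forall_true_left, Set.mem_Icc, abs_le]
    rfl
  rw [h1, ← Homeomorph.image_symm]
  exact (isCompact_univ_pi fun _ => isCompact_Icc).image (Homeomorph.continuous _)

lemma integrable_gsub1 {d : ℕ} (g : Pt d → ℝ) (hg : Measurable g)
    (hD1 : ∫⁻ h, ENNReal.ofReal |g h - 1| < ⊤) :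
    Integrable (fun h : Pt d => g h - 1) := by
  refine ⟨(hg.sub measurable_const).aestronglyMeasurable, ?_⟩
  rw [hasFiniteIntegral_iff_norm]
  simpa [Real.norm_eq_abs] using hD1

lemma dct (d : ℕ) (hd : 1 ≤ d) (g : Pt d → ℝ) (hg : Measurable g)
    (hD1 : ∫⁻ h, ENNReal.ofReal |g h - 1| < ⊤) :
    Tendsto (fun n : ℕ => ∫ h : Pt d, (g h - 1) * cc d n h) atTop
      (𝓝 (∫ h : Pt d, (g h - 1))) := by
  apply tendsto_integral_of_dominated_convergence (fun h => |g h - 1|)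
  · intro n
    exact ((hg.sub measurable_const).mul (cc_meas d n)).aestronglyMeasurable
  · exact (integrable_gsub1 g hg hD1).abs
  · intro n
    filter_upwards with h
    rw [Real.norm_eq_abs, abs_mul]
    calc |g h - 1| * |cc d n h| ≤ |g h - 1| * 1 := by
          apply mul_le_mul_of_nonneg_left _ (abs_nonneg _)
          rw [abs_of_nonneg (cc_nonneg d n h)]
          exact cc_le_one d n hd h
      _ = |g h - 1| := mul_one _
  · filter_upwards with h
    have := (cc_tendsto d hd h).const_mul (g h - 1)
    simpa using this

end Aux

/-- `lim_n n Var(β̂_n) = β² ∫ (g(x) − 1) dx + β`. -/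
theorem statement14
    {d : ℕ} (hd : 1 ≤ d)
    {Ω : Type*} [MeasurableSpace Ω] (μ : Measure Ω) [IsProbabilityMeasure μ]
    (P : Ω → Set (Pt d))
    (hPloc : ∀ ω, ∀ K : Set (Pt d), IsCompact K → (P ω ∩ K).Finite)
    (β : ℝ) (hβ : 0 < β)
    (hβmeas : ∀ n, Measurable (betahat P n))
    (hKmeas : ∀ n r, Measurable (KhatC P β n r))
    -- normalized joint intensities: measurable, bounded, translation invariant
    (g : Pt d → ℝ) (hgmeas : Measurable g) (hg0 : ∀ x, 0 ≤ g x)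
    (g3 : Pt d → Pt d → Pt d → ℝ)
    (hg3meas : Measurable fun q : Pt d × Pt d × Pt d => g3 q.1 q.2.1 q.2.2)
    (hg3ti : ∀ v x y z : Pt d, g3 (x + v) (y + v) (z + v) = g3 x y z)
    (g4 : Pt d → Pt d → Pt d → Pt d → ℝ)
    (hg4meas : Measurable fun q : Pt d × Pt d × Pt d × Pt d =>
      g4 q.1 q.2.1 q.2.2.1 q.2.2.2)
    (hg4ti : ∀ v x y z w : Pt d, g4 (x + v) (y + v) (z + v) (w + v) = g4 x y z w)
    (hB : ∃ M : ℝ, (∀ x, |g x| ≤ M) ∧ (∀ x y z, |g3 x y z| ≤ M) ∧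
      (∀ x y z w, |g4 x y z w| ≤ M))
    -- Campbell formulae for constant intensity β
    (hC1 : ∀ f : Pt d → ℝ≥0∞, Measurable f →
      ∫⁻ ω, ∑' x : (P ω), f (x : Pt d) ∂μ = ENNReal.ofReal β * ∫⁻ x, f x)
    (hC2 : ∀ f : Pt d → Pt d → ℝ≥0∞, Measurable (Function.uncurry f) →
      ∫⁻ ω, ∑' q : pairs (P ω), f q.val.1 q.val.2 ∂μ
        = ENNReal.ofReal β ^ 2 *
            ∫⁻ x, ∫⁻ y, f x y * ENNReal.ofReal (g (x - y)))
    (hC3 : ∀ f : Pt d → Pt d → Pt d → ℝ≥0∞,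
      Measurable (fun q : Pt d × Pt d × Pt d => f q.1 q.2.1 q.2.2) →
      ∫⁻ ω, ∑' q : triples (P ω), f q.val.1 q.val.2.1 q.val.2.2 ∂μ
        = ENNReal.ofReal β ^ 3 *
            ∫⁻ x, ∫⁻ y, ∫⁻ z, f x y z * ENNReal.ofReal (g3 x y z))
    (hC4 : ∀ f : Pt d → Pt d → Pt d → Pt d → ℝ≥0∞,
      Measurable (fun q : Pt d × Pt d × Pt d × Pt d => f q.1 q.2.1 q.2.2.1 q.2.2.2) →
      ∫⁻ ω, ∑' q : quads (P ω), f q.val.1 q.val.2.1 q.val.2.2.1 q.val.2.2.2 ∂μ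
        = ENNReal.ofReal β ^ 4 *
            ∫⁻ x, ∫⁻ y, ∫⁻ z, ∫⁻ w, f x y z w * ENNReal.ofReal (g4 x y z w))
    -- decay assumption (D)
    (hD1 : ∫⁻ h, ENNReal.ofReal |g h - 1| < ⊤)
    (hD2 : (⨆ x : Pt d, ∫⁻ z, ENNReal.ofReal |g3 0 x z - g x|) < ⊤)
    (hD3 : (⨆ u₁ : Pt d, ⨆ u₂ : Pt d,
        ∫⁻ u₄, ENNReal.ofReal |g4 0 u₁ u₄ (u₂ + u₄) - g u₁ * g u₂|) < ⊤)
    :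
    Tendsto (fun n : ℕ => (n : ℝ) * ProbabilityTheory.variance (betahat P n) μ)
      atTop (𝓝 (β ^ 2 * (∫ x : Pt d, (g x - 1)) + β)) := by
  classical
  obtain ⟨M, hMg, hMg3, hMg4⟩ := hB
  -- key identity for each n ≥ 1
  have key : ∀ n : ℕ, 1 ≤ n →
      (n : ℝ) * ProbabilityTheory.variance (betahat P n) μ
        = β + β ^ 2 * ∫ h : Pt d, (g h - 1) * cc d n h := by
    intro n hn
    set W := Wn d n with hW
    set I : Pt d → ℝ≥0∞ := W.indicator 1 with hI
    have hImeas : Measurable I := measurable_const.indicator (Wn_meas d n)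
    set m : Ω → ℕ := fun ω => (P ω ∩ W).ncard with hm
    set mE : Ω → ℝ≥0∞ := fun ω => ((m ω : ℕ) : ℝ≥0∞) with hmE
    have hfin : ∀ ω, (P ω ∩ W).Finite := fun ω => hPloc ω W (Wn_compact d n)
    have hnR : (0:ℝ) < n := by exact_mod_cast hn
    have hnE0 : (n : ℝ≥0∞) ≠ 0 := by exact_mod_cast hnR.ne'
    have hnET : (n : ℝ≥0∞) ≠ ⊤ := ENNReal.natCast_ne_top n
    -- betahat in terms of m
    have hXm : ∀ ω, betahat P n ω = (m ω : ℝ) / n := fun ω => rfl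
    have hXnn : ∀ ω, 0 ≤ betahat P n ω := fun ω => by
      rw [hXm]; positivity
    -- measurability of mE
    have hmR : Measurable fun ω => (m ω : ℝ) := by
      have h1 : (fun ω => (m ω : ℝ)) = fun ω => betahat P n ω * n := by
        funext ω; rw [hXm]; field_simp
      rw [h1]; exact (hβmeas n).mul_const _
    have hmEmeas : Measurable mE := by
      have := hmR.ennreal_ofReal
      simpa [hmE, ENNReal.ofReal_natCast] using this
    -- first moment
    have E1 : ∫⁻ ω, mE ω ∂μ = ENNReal.ofReal β * n := by
      have h1 := hC1 I hImeas
      have h2 : ∀ ω, (∑' x : (P ω), I (x : Pt d)) = mE ω := by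
        intro ω
        rw [hI, count_lemma_a (P ω) W (hfin ω)]
      calc ∫⁻ ω, mE ω ∂μ = ∫⁻ ω, ∑' x : (P ω), I (x : Pt d) ∂μ := by
            exact (lintegral_congr h2).symm
        _ = ENNReal.ofReal β * ∫⁻ x, I x := h1
        _ = ENNReal.ofReal β * n := by
            rw [hI, lintegral_indicator_one (Wn_meas d n), Wn_vol d n hd]
    -- second factorial moment
    set LL : ℝ≥0∞ := ∫⁻ h, ENNReal.ofReal (g h) * Vn d n h with hLL
    have E2 : ∫⁻ ω, ((m ω * m ω - m ω : ℕ) : ℝ≥0∞) ∂μ = ENNReal.ofReal β ^ 2 * LL := by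
      have h1 := hC2 (fun x y => I x * I y)
        ((hImeas.comp measurable_fst).mul (hImeas.comp measurable_snd))
      have h2 : ∀ ω, (∑' q : pairs (P ω), I q.val.1 * I q.val.2)
          = ((m ω * m ω - m ω : ℕ) : ℝ≥0∞) := by
        intro ω
        rw [hI, count_lemma_b (P ω) W (hfin ω)]
      have h3 := key_int d n (fun h => ENNReal.ofReal (g h)) hgmeas.ennreal_ofReal
      calc ∫⁻ ω, ((m ω * m ω - m ω : ℕ) : ℝ≥0∞) ∂μ
          = ∫⁻ ω, ∑' q : pairs (P ω), I q.val.1 * I q.val.2 ∂μ :=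
            (lintegral_congr h2).symm
        _ = ENNReal.ofReal β ^ 2 * ∫⁻ x, ∫⁻ y, (I x * I y) * ENNReal.ofReal (g (x - y)) := h1
        _ = ENNReal.ofReal β ^ 2 * LL := by rw [hLL, ← h3]
    -- finiteness of LL
    have hM0 : 0 ≤ M := le_trans (abs_nonneg _) (hMg 0)
    have LLfin : LL ≠ ⊤ := by
      have hb : ∀ h : Pt d, ENNReal.ofReal (g h) * Vn d n h
          ≤ ENNReal.ofReal M * Vn d n h := by
        intro h
        exact mul_le_mul_left (ENNReal.ofReal_le_ofReal
          (le_trans (le_abs_self _) (hMg h))) _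
      have : LL ≤ ENNReal.ofReal M * ((n : ℝ≥0∞) * n) := by
        rw [hLL]
        calc ∫⁻ h, ENNReal.ofReal (g h) * Vn d n h
            ≤ ∫⁻ h, ENNReal.ofReal M * Vn d n h := lintegral_mono hb
          _ = ENNReal.ofReal M * ∫⁻ h, Vn d n h :=
              lintegral_const_mul _ (Vn_meas d n)
          _ = ENNReal.ofReal M * ((n : ℝ≥0∞) * n) := by rw [Vn_total d n hd]
      exact ne_top_of_le_ne_top (by finiteness) this
    -- real versions of Vn
    set vn : Pt d → ℝ := fun h => (Vn d n h).toReal with hvn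
    have vn_nonneg : ∀ h, 0 ≤ vn h := fun h => ENNReal.toReal_nonneg
    have vn_le : ∀ h, vn h ≤ n := by
      intro h
      have := ENNReal.toReal_mono hnET (Vn_le d n hd h)
      simpa using this
    have vn_meas : Measurable vn := (Vn_meas d n).ennreal_toReal
    have vn_int : Integrable vn := by
      apply integrable_toReal_of_lintegral_ne_top (Vn_meas d n).aemeasurable
      rw [Vn_total d n hd]
      finiteness
    have vn_integral : ∫ h, vn h = (n : ℝ) * n := by
      rw [hvn, integral_toReal (Vn_meas d n).aemeasurable
        (ae_of_all _ fun h => lt_top_iff_ne_top.2 (Vn_ne_top d n hd h)),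
        Vn_total d n hd]
      simp
    have hg1int : Integrable (fun h : Pt d => g h - 1) := integrable_gsub1 g hgmeas hD1
    have gv_int : Integrable (fun h : Pt d => (g h - 1) * vn h) := by
      apply Integrable.mono' (hg1int.abs.const_mul (n : ℝ))
        (((hgmeas.sub measurable_const).mul vn_meas).aestronglyMeasurable)
      filter_upwards with h
      rw [Real.norm_eq_abs, Pi.mul_apply, Pi.sub_apply, abs_mul, abs_of_nonneg (vn_nonneg h)]
      calc |g h - 1| * vn h ≤ |g h - 1| * n :=
            mul_le_mul_of_nonneg_left (vn_le h) (abs_nonneg _)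
        _ = (n : ℝ) * |g h - 1| := mul_comm _ _
    -- LL in real terms
    have L_toReal : LL.toReal = ∫ h, g h * vn h := by
      rw [integral_eq_lintegral_of_nonneg_ae
        (ae_of_all _ fun h => mul_nonneg (hg0 h) (vn_nonneg h))
        ((hgmeas.mul vn_meas).aestronglyMeasurable)]
      congr 1
      rw [hLL]
      apply lintegral_congr
      intro h
      rw [ENNReal.ofReal_mul (hg0 h), hvn, ENNReal.ofReal_toReal (Vn_ne_top d n hd h)]
    have Lsplit : LL.toReal = (n : ℝ) * n + ∫ h, (g h - 1) * vn h := by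
      rw [L_toReal]
      have h1 : (fun h : Pt d => g h * vn h)
          = fun h => (g h - 1) * vn h + vn h := by funext h; ring
      rw [h1, integral_add gv_int vn_int, vn_integral]
      ring
    -- expectation of betahat
    have EX : ∫ ω, betahat P n ω ∂μ = β := by
      rw [integral_eq_lintegral_of_nonneg_ae (ae_of_all _ hXnn)
        (hβmeas n).aestronglyMeasurable]
      have h1 : ∀ ω, ENNReal.ofReal (betahat P n ω) = mE ω * (n : ℝ≥0∞)⁻¹ := by
        intro ω
        rw [hXm, div_eq_mul_inv, ENNReal.ofReal_mul (Nat.cast_nonneg _),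
          ENNReal.ofReal_inv_of_pos hnR, ENNReal.ofReal_natCast, ENNReal.ofReal_natCast]
      simp_rw [h1]
      rw [lintegral_mul_const' _ _ (by simp [hnE0]), E1, mul_assoc,
        ENNReal.mul_inv_cancel hnE0 hnET, mul_one, ENNReal.toReal_ofReal hβ.le]
    -- second moment
    have hm2 : ∀ ω, mE ω * mE ω = mE ω + ((m ω * m ω - m ω : ℕ) : ℝ≥0∞) := by
      intro ω
      have hk : m ω * m ω = m ω + (m ω * m ω - m ω) := by
        rcases Nat.eq_zero_or_pos (m ω) with h0 | h0
        · simp [h0]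
        · exact (Nat.add_sub_cancel' (Nat.le_mul_of_pos_left _ h0)).symm
      calc mE ω * mE ω = ((m ω * m ω : ℕ) : ℝ≥0∞) := (Nat.cast_mul _ _).symm
        _ = ((m ω + (m ω * m ω - m ω) : ℕ) : ℝ≥0∞) := by rw [← hk]
        _ = mE ω + ((m ω * m ω - m ω : ℕ) : ℝ≥0∞) := Nat.cast_add _ _
    have hnn2 : ((n : ℝ≥0∞) * n)⁻¹ ≠ ⊤ := by
      simp [ENNReal.inv_ne_top, hnE0]
    have lint2 : ∫⁻ ω, ENNReal.ofReal (betahat P n ω ^ 2) ∂μ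
        = (ENNReal.ofReal β * n + ENNReal.ofReal β ^ 2 * LL) * ((n : ℝ≥0∞) * n)⁻¹ := by
      have h1 : ∀ ω, ENNReal.ofReal (betahat P n ω ^ 2)
          = mE ω * mE ω * ((n : ℝ≥0∞) * n)⁻¹ := by
        intro ω
        rw [hXm]
        rw [show ((m ω : ℝ) / n) ^ 2 = (m ω : ℝ) * (m ω : ℝ) * ((n : ℝ) * n)⁻¹ by
          field_simp]
        rw [ENNReal.ofReal_mul (by positivity), ENNReal.ofReal_mul (by positivity),
          ENNReal.ofReal_inv_of_pos (by positivity), ENNReal.ofReal_mul (by positivity)]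
        simp [ENNReal.ofReal_natCast, hmE]
      simp_rw [h1]
      rw [lintegral_mul_const' _ _ hnn2]
      congr 1
      rw [lintegral_congr hm2, lintegral_add_left hmEmeas, E1, E2]
    have ofRβ : (ENNReal.ofReal β * ↑n).toReal = β * n := by
      rw [ENNReal.toReal_mul, ENNReal.toReal_ofReal hβ.le, ENNReal.toReal_natCast]
    have ofRβ2 : (ENNReal.ofReal β ^ 2 * LL).toReal = β ^ 2 * LL.toReal := by
      rw [ENNReal.toReal_mul, ENNReal.toReal_pow, ENNReal.toReal_ofReal hβ.le]
    have hA_ne : ENNReal.ofReal β * ↑n ≠ ⊤ ∧ ENNReal.ofReal β ^ 2 * LL ≠ ⊤ := by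
      constructor
      · finiteness
      · exact ENNReal.mul_ne_top (ENNReal.pow_ne_top ENNReal.ofReal_ne_top) LLfin
    have EX2 : ∫ ω, (betahat P n ^ 2) ω ∂μ
        = (β * n + β ^ 2 * LL.toReal) / ((n : ℝ) * n) := by
      have hae : 0 ≤ᵐ[μ] fun ω => (betahat P n ^ 2) ω :=
        ae_of_all _ fun ω => sq_nonneg _
      rw [integral_eq_lintegral_of_nonneg_ae hae
        ((hβmeas n).pow_const 2).aestronglyMeasurable]
      have : (fun ω => ENNReal.ofReal ((betahat P n ^ 2) ω))
          = fun ω => ENNReal.ofReal (betahat P n ω ^ 2) := rfl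
      rw [this, lint2, ENNReal.toReal_mul, ENNReal.toReal_add hA_ne.1 hA_ne.2,
        ofRβ, ofRβ2, ENNReal.toReal_inv, ENNReal.toReal_mul, ENNReal.toReal_natCast,
        div_eq_mul_inv]
    have hint2 : Integrable (fun ω => betahat P n ω ^ 2) μ := by
      refine ⟨((hβmeas n).pow_const 2).aestronglyMeasurable, ?_⟩
      rw [hasFiniteIntegral_iff_norm]
      have : ∀ ω, ENNReal.ofReal ‖betahat P n ω ^ 2‖ = ENNReal.ofReal (betahat P n ω ^ 2) := by
        intro ω
        rw [Real.norm_eq_abs, abs_of_nonneg (sq_nonneg _)]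
      simp_rw [this]
      rw [lint2]
      exact ENNReal.mul_lt_top
        (ENNReal.add_lt_top.2 ⟨hA_ne.1.lt_top, hA_ne.2.lt_top⟩) hnn2.lt_top
    -- Memℒp and variance
    have hmem : MemLp (betahat P n) 2 μ := by
      rw [memLp_two_iff_integrable_sq (hβmeas n).aestronglyMeasurable]
      exact hint2
    have hnne : (n : ℝ) ≠ 0 := hnR.ne'
    rw [ProbabilityTheory.variance_eq_sub hmem, EX2, EX]
    rw [Lsplit]
    have hSn : (∫ h, (g h - 1) * vn h) / (n : ℝ) = ∫ h, (g h - 1) * cc d n h := by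
      rw [← integral_div]
      apply integral_congr_ae
      filter_upwards with h
      rw [mul_div_assoc]
      rfl
    rw [← hSn]
    field_simp
    ring
  -- pass to the limit
  have hT : Tendsto (fun n : ℕ => β + β ^ 2 * ∫ h : Pt d, (g h - 1) * cc d n h)
      atTop (𝓝 (β + β ^ 2 * ∫ h : Pt d, (g h - 1))) :=
    tendsto_const_nhds.add ((dct d hd g hgmeas hD1).const_mul _)
  have hcomm : β ^ 2 * (∫ x : Pt d, (g x - 1)) + β
      = β + β ^ 2 * ∫ h : Pt d, (g h - 1) := by ring
  rw [hcomm]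
  apply hT.congr'
  filter_upwards [Filter.eventually_ge_atTop 1] with n hn
  exact (key n hn).symm
end
end
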